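/- arXiv:2604.25202 — 6 statements merged into one kernel-verified Lean document; each statement's English description precedes it below -/
import Mathlib

section
/- Under Assumption (D), every interval of minimal length in the class I_{1−α} has μ-mass exactly 1−α and can be written as the quantile core B_τ for some τ ∈ T*; conversely, every quantile core B_τ with τ ∈ T* is an interval of minimal length in I_{1−α}. In particular, the minimal length over I_{1−α} equals L*. -/
open MeasureTheory Set Filter

noncomputable section

/-- Topological support of a Borel measure on ℝ. -/
def msupp (μ : Measure ℝ) : Set ℝ := {y | ∀ U ∈ nhds y, 0 < μ U}

/-- CDF of `μ`. -/
def cdfR (μ : Measure ℝ) (y : ℝ) : ℝ := (μ (Iic y)).toReal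

/-- The `τ`-th quantile of `μ` (for `τ ∈ (0,1)`). -/
def quant (μ : Measure ℝ) (τ : ℝ) : ℝ := sInf {y : ℝ | τ ≤ cdfR μ y}

/-- Extended-real quantile: at `τ ≤ 0` the infimum of the support, at `τ ≥ 1` the
supremum of the support (possibly `±∞`), and otherwise the usual quantile. -/
def qE (μ : Measure ℝ) (τ : ℝ) : EReal :=
  if τ ≤ 0 then sInf (Real.toEReal '' msupp μ)
  else if 1 ≤ τ then sSup (Real.toEReal '' msupp μ)
  else ((quant μ τ : ℝ) : EReal)

/-- Extended-real length of the quantile core `B_τ = [q_τ, q_{1-α+τ}]`. -/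
def coreLen (μ : Measure ℝ) (α τ : ℝ) : EReal := qE μ (1 - α + τ) - qE μ τ

/-- The oracle allocation set `T* = argmin_{τ ∈ [0,α]} L_τ`. -/
def Tstar (μ : Measure ℝ) (α : ℝ) : Set ℝ :=
  {τ | τ ∈ Icc 0 α ∧ ∀ σ ∈ Icc 0 α, coreLen μ α τ ≤ coreLen μ α σ}

/-- Membership of the interval `[a,b]` in the class `I_{1-α}`. -/
def InClass (μ : Measure ℝ) (α a b : ℝ) : Prop :=
  a ≤ b ∧ 1 - α ≤ (μ (Icc a b)).toReal

/-- `[a,b]` is a shortest interval in the class `I_{1-α}`. -/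
def IsShortest (μ : Measure ℝ) (α a b : ℝ) : Prop :=
  InClass μ α a b ∧ ∀ c d : ℝ, InClass μ α c d → b - a ≤ d - c

/-- Assumption (D): the support of `μ` is an interval and `μ` has a density `f`
that is strictly positive and continuously differentiable on the support. -/
structure AssumpD (μ : Measure ℝ) (f : ℝ → ℝ) : Prop where
  meas : Measurable f
  density : μ = MeasureTheory.volume.withDensity (fun y => ENNReal.ofReal (f y))
  interval : (msupp μ).OrdConnected
  pos : ∀ y ∈ msupp μ, 0 < f y
  smooth : ContDiffOn ℝ 1 f (msupp μ)

/-- Strict unimodality of the density `f` with mode `y0`: `y0` lies in the support,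
`f` is strictly increasing before the mode and strictly decreasing after it. -/
def StrictUnimodalAt (μ : Measure ℝ) (f : ℝ → ℝ) (y0 : ℝ) : Prop :=
  y0 ∈ msupp μ ∧ StrictMonoOn f (msupp μ ∩ Iic y0) ∧ StrictAntiOn f (msupp μ ∩ Ici y0)

namespace Stmt1Proof
set_option linter.unusedSectionVars false

open ProbabilityTheory

variable (μ : Measure ℝ)

lemma isClosed_msupp : IsClosed (msupp μ) := by
  rw [← isOpen_compl_iff, isOpen_iff_mem_nhds]
  intro y hy
  simp only [mem_compl_iff, msupp, mem_setOf_eq, not_forall] at hy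
  obtain ⟨U, hU, hU0⟩ := hy
  have hU0' : μ U = 0 := le_antisymm (not_lt.1 hU0) zero_le
  obtain ⟨V, hVU, hVopen, hyV⟩ := mem_nhds_iff.1 hU
  filter_upwards [hVopen.mem_nhds hyV] with z hz
  simp only [mem_compl_iff, msupp, mem_setOf_eq, not_forall]
  exact ⟨V, hVopen.mem_nhds hz, not_lt.2 (le_trans (measure_mono hVU) hU0'.le)⟩

lemma msupp_compl_null : μ (msupp μ)ᶜ = 0 := by
  classical
  set B := TopologicalSpace.countableBasis ℝ with hBdef
  have hB : TopologicalSpace.IsTopologicalBasis B := TopologicalSpace.isBasis_countableBasis ℝ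
  have hcover : (msupp μ)ᶜ ⊆ ⋃₀ {s ∈ B | μ s = 0} := by
    intro y hy
    simp only [mem_compl_iff, msupp, mem_setOf_eq, not_forall] at hy
    obtain ⟨U, hU, hU0⟩ := hy
    have hU0' : μ U = 0 := le_antisymm (not_lt.1 hU0) zero_le
    obtain ⟨s, hsB, hys, hsU⟩ := hB.mem_nhds_iff.1 hU
    exact ⟨s, ⟨hsB, le_antisymm (le_trans (measure_mono hsU) hU0'.le) zero_le⟩, hys⟩
  refine measure_mono_null hcover ?_
  rw [measure_sUnion_null_iff ((TopologicalSpace.countable_countableBasis ℝ).mono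
    (sep_subset _ _))]
  exact fun t ht => ht.2

lemma exists_mem_msupp {s : Set ℝ} (h : μ s ≠ 0) : (s ∩ msupp μ).Nonempty := by
  by_contra hne
  rw [not_nonempty_iff_eq_empty] at hne
  exact h (measure_mono_null (fun x hx => by
    by_contra hx'
    exact (eq_empty_iff_forall_notMem.1 hne x) ⟨hx, not_not.1 hx'⟩) (msupp_compl_null μ))

variable [IsProbabilityMeasure μ]

lemma msupp_nonempty : (msupp μ).Nonempty := by
  obtain ⟨s, -, hs⟩ := exists_mem_msupp μ (s := univ)
    (by rw [measure_univ]; exact one_ne_zero)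
  exact ⟨s, hs⟩

lemma cdfR_eq : cdfR μ = ⇑(cdf μ) := funext fun x => (cdf_eq_real μ x).symm

lemma mono_cdfR : Monotone (cdfR μ) := by rw [cdfR_eq]; exact monotone_cdf μ

lemma cdfR_nonneg (x : ℝ) : 0 ≤ cdfR μ x := by rw [cdfR_eq]; exact cdf_nonneg μ x

lemma cdfR_le_one (x : ℝ) : cdfR μ x ≤ 1 := by rw [cdfR_eq]; exact cdf_le_one μ x

lemma tendsto_cdfR_atBot : Tendsto (cdfR μ) atBot (nhds 0) := by
  rw [cdfR_eq]; exact tendsto_cdf_atBot μ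

lemma tendsto_cdfR_atTop : Tendsto (cdfR μ) atTop (nhds 1) := by
  rw [cdfR_eq]; exact tendsto_cdf_atTop μ

lemma meas_Iic (x : ℝ) : μ (Iic x) = ENNReal.ofReal (cdfR μ x) := by
  rw [show cdfR μ x = cdf μ x from congrFun (cdfR_eq μ) x, ofReal_cdf]

lemma leftLim_cdf_eq (hnull : ∀ x : ℝ, μ {x} = 0) (x : ℝ) :
    Function.leftLim (cdf μ) x = cdf μ x := by
  have h := (cdf μ).measure_singleton x
  rw [measure_cdf, hnull x] at h
  have h2 : cdf μ x - Function.leftLim (cdf μ) x ≤ 0 := ENNReal.ofReal_eq_zero.1 h.symm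
  have h3 := (monotone_cdf μ).leftLim_le (le_refl x)
  linarith

lemma cont_cdfR (hnull : ∀ x : ℝ, μ {x} = 0) : Continuous (cdfR μ) := by
  rw [cdfR_eq, continuous_iff_continuousAt]
  intro x
  refine ((monotone_cdf μ).continuousAt_iff_leftLim_eq_rightLim).2 ?_
  have hr : Function.rightLim (cdf μ) x = cdf μ x :=
    ((monotone_cdf μ).continuousWithinAt_Ioi_iff_rightLim_eq).1
      (((cdf μ).right_continuous x).mono Ioi_subset_Ici_self)
  rw [leftLim_cdf_eq μ hnull, hr]

lemma meas_Icc (hnull : ∀ x : ℝ, μ {x} = 0) (a b : ℝ) :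
    μ (Icc a b) = ENNReal.ofReal (cdfR μ b - cdfR μ a) := by
  conv_lhs => rw [← measure_cdf μ]
  rw [(cdf μ).measure_Icc, leftLim_cdf_eq μ hnull a,
    ← congrFun (cdfR_eq μ) a, ← congrFun (cdfR_eq μ) b]

lemma meas_Ioo (hnull : ∀ x : ℝ, μ {x} = 0) (a b : ℝ) :
    μ (Ioo a b) = ENNReal.ofReal (cdfR μ b - cdfR μ a) := by
  conv_lhs => rw [← measure_cdf μ]
  rw [(cdf μ).measure_Ioo, leftLim_cdf_eq μ hnull b,
    ← congrFun (cdfR_eq μ) a, ← congrFun (cdfR_eq μ) b]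

lemma mass_Icc (hnull : ∀ x : ℝ, μ {x} = 0) {a b : ℝ} (hab : a ≤ b) :
    (μ (Icc a b)).toReal = cdfR μ b - cdfR μ a := by
  rw [meas_Icc μ hnull, ENNReal.toReal_ofReal (sub_nonneg.2 (mono_cdfR μ hab))]

lemma meas_Ioi (x : ℝ) : μ (Ioi x) = 1 - ENNReal.ofReal (cdfR μ x) := by
  rw [← compl_Iic, measure_compl measurableSet_Iic (measure_ne_top μ _), measure_univ,
    meas_Iic]

lemma exists_supp_le {a : ℝ} (h : 0 < cdfR μ a) : ∃ s ∈ msupp μ, s ≤ a := by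
  have hne : μ (Iic a) ≠ 0 := by
    rw [meas_Iic]
    simp only [ne_eq, ENNReal.ofReal_eq_zero, not_le]
    exact h
  obtain ⟨s, hs1, hs2⟩ := exists_mem_msupp μ hne
  exact ⟨s, hs2, hs1⟩

lemma exists_supp_ge {b : ℝ} (h : cdfR μ b < 1) : ∃ s ∈ msupp μ, b ≤ s := by
  have hne : μ (Ioi b) ≠ 0 := by
    rw [meas_Ioi]
    simp only [ne_eq, tsub_eq_zero_iff_le, not_le]
    exact ENNReal.ofReal_lt_one.2 h
  obtain ⟨s, hs1, hs2⟩ := exists_mem_msupp μ hne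
  exact ⟨s, hs2, (le_of_lt hs1)⟩

lemma supp_subset_Ici {c : ℝ} (h : cdfR μ c = 0) : msupp μ ⊆ Ici c := by
  intro s hs
  by_contra hlt
  simp only [mem_Ici, not_le] at hlt
  have h1 : 0 < μ (Iio c) := hs (Iio c) (Iio_mem_nhds hlt)
  have h2 : μ (Iio c) ≤ μ (Iic c) := measure_mono Iio_subset_Iic_self
  rw [meas_Iic, h, ENNReal.ofReal_zero] at h2
  exact absurd (le_antisymm h2 zero_le) h1.ne'

lemma supp_subset_Iic {d : ℝ} (h : cdfR μ d = 1) : msupp μ ⊆ Iic d := by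
  intro s hs
  by_contra hlt
  simp only [mem_Iic, not_le] at hlt
  have h1 : 0 < μ (Ioi d) := hs (Ioi d) (Ioi_mem_nhds hlt)
  have h2 : μ (Ioi d) = 0 := by
    rw [meas_Ioi, h, ENNReal.ofReal_one, tsub_self]
  exact absurd h2 h1.ne'

lemma pos_Ioo {f : ℝ → ℝ} (hD : AssumpD μ f) {u v : ℝ} (huv : u < v)
    (hsub : Ioo u v ⊆ msupp μ) : μ (Ioo u v) ≠ 0 := by
  rw [hD.density]
  intro h0
  rw [withDensity_apply_eq_zero hD.meas.ennreal_ofReal] at h0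
  have heq : {x | ENNReal.ofReal (f x) ≠ 0} ∩ Ioo u v = Ioo u v := by
    refine inter_eq_self_of_subset_right (fun x hx => ?_)
    simp only [mem_setOf_eq, ne_eq, ENNReal.ofReal_eq_zero, not_le]
    exact hD.pos x (hsub hx)
  rw [heq, Real.volume_Ioo] at h0
  simp only [ENNReal.ofReal_eq_zero, not_le] at h0
  linarith [h0, huv]

lemma cdfR_lt {f : ℝ → ℝ} (hD : AssumpD μ f) (hnull : ∀ x : ℝ, μ {x} = 0)
    {s1 s2 u v : ℝ} (hs1 : s1 ∈ msupp μ) (hs2 : s2 ∈ msupp μ)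
    (h1 : s1 ≤ u) (huv : u < v) (h2 : v ≤ s2) : cdfR μ u < cdfR μ v := by
  have hsub : Ioo u v ⊆ msupp μ := fun x hx =>
    hD.interval.out hs1 hs2 ⟨h1.trans hx.1.le, hx.2.le.trans h2⟩
  have hpos := pos_Ioo μ hD huv hsub
  rw [meas_Ioo μ hnull] at hpos
  simp only [ne_eq, ENNReal.ofReal_eq_zero, not_le] at hpos
  linarith

lemma quant_spec (hnull : ∀ x : ℝ, μ {x} = 0) {τ : ℝ} (h0 : 0 < τ) (h1 : τ < 1) :
    cdfR μ (quant μ τ) = τ ∧ ∀ y, quant μ τ ≤ y ↔ τ ≤ cdfR μ y := by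
  have hmono := mono_cdfR μ
  have hcont := cont_cdfR μ hnull
  have hSclosed : IsClosed {y : ℝ | τ ≤ cdfR μ y} := isClosed_le continuous_const hcont
  obtain ⟨y1, hy1⟩ : ∃ y, τ ≤ cdfR μ y :=
    ((tendsto_cdfR_atTop μ).eventually (eventually_ge_nhds h1)).exists
  obtain ⟨y0, hy0⟩ : ∃ y, cdfR μ y < τ :=
    ((tendsto_cdfR_atBot μ).eventually (eventually_lt_nhds h0)).exists
  have hbdd : BddBelow {y : ℝ | τ ≤ cdfR μ y} := by
    refine ⟨y0, fun y hy => ?_⟩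
    by_contra hc
    push_neg at hc
    exact absurd hy (not_le.2 ((hmono hc.le).trans_lt hy0))
  have hmem : quant μ τ ∈ {y : ℝ | τ ≤ cdfR μ y} := by
    rw [quant]; exact hSclosed.csInf_mem ⟨y1, hy1⟩ hbdd
  have hq : cdfR μ (quant μ τ) = τ := by
    refine le_antisymm ?_ hmem
    by_contra h
    push_neg at h
    have hy0q : y0 ≤ quant μ τ :=
      le_of_not_gt fun hc => absurd (hmono hc.le) (not_le.2 (hy0.trans_le hmem))
    obtain ⟨y, hyIcc, hyF⟩ := intermediate_value_Icc hy0q hcont.continuousOn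
      (show τ ∈ Icc (cdfR μ y0) (cdfR μ (quant μ τ)) from ⟨hy0.le, hmem⟩)
    have hqy : quant μ τ ≤ y := csInf_le hbdd (le_of_eq hyF.symm)
    have : y = quant μ τ := le_antisymm hyIcc.2 hqy
    rw [← this, hyF] at h
    exact lt_irrefl τ h
  exact ⟨hq, fun y => ⟨fun h => hq ▸ hmono h, fun h => csInf_le hbdd h⟩⟩

lemma le_quant {f : ℝ → ℝ} (hD : AssumpD μ f) (hnull : ∀ x : ℝ, μ {x} = 0)
    {τ c : ℝ} (h0 : 0 < τ) (h1 : τ < 1) (hc : cdfR μ c ≤ τ)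
    (hs2 : ∃ s ∈ msupp μ, c ≤ s) : c ≤ quant μ τ := by
  by_contra h
  push_neg at h
  have hspec := quant_spec μ hnull h0 h1
  have hFq : cdfR μ (quant μ τ) = τ := hspec.1
  have hFc : cdfR μ c = τ := le_antisymm hc (hFq ▸ mono_cdfR μ h.le)
  obtain ⟨s1, hs1supp, hs1le⟩ := exists_supp_le μ (by rw [hFq]; exact h0)
  obtain ⟨s2, hs2supp, hs2ge⟩ := hs2
  have := cdfR_lt μ hD hnull hs1supp hs2supp hs1le h hs2ge
  rw [hFq, hFc] at this
  exact lt_irrefl τ this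

lemma sInfE_of_bddBelow (hne : (msupp μ).Nonempty) (hbdd : BddBelow (msupp μ)) :
    sInf (Real.toEReal '' msupp μ) = ((sInf (msupp μ) : ℝ) : EReal) := by
  apply le_antisymm
  · exact sInf_le ⟨_, (isClosed_msupp μ).csInf_mem hne hbdd, rfl⟩
  · refine le_sInf ?_
    rintro x ⟨s, hs, rfl⟩
    exact EReal.coe_le_coe_iff.2 (csInf_le hbdd hs)

lemma sInfE_of_unbdd (h : ¬ BddBelow (msupp μ)) :
    sInf (Real.toEReal '' msupp μ) = ⊥ := by
  rw [sInf_eq_bot]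
  intro b hb
  have hall : ∀ x : ℝ, ∃ s ∈ msupp μ, s < x := by
    intro x
    by_contra hc
    push_neg at hc
    exact h ⟨x, fun s hs => hc s hs⟩
  induction b with
  | bot => exact absurd hb (lt_irrefl _)
  | coe r =>
    obtain ⟨s, hs, hsr⟩ := hall r
    exact ⟨(s : EReal), ⟨s, hs, rfl⟩, EReal.coe_lt_coe_iff.2 hsr⟩
  | top =>
    obtain ⟨s, hs, -⟩ := hall 0
    exact ⟨(s : EReal), ⟨s, hs, rfl⟩, EReal.coe_lt_top s⟩

lemma sSupE_of_bddAbove (hne : (msupp μ).Nonempty) (hbdd : BddAbove (msupp μ)) :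
    sSup (Real.toEReal '' msupp μ) = ((sSup (msupp μ) : ℝ) : EReal) := by
  apply le_antisymm
  · refine sSup_le ?_
    rintro x ⟨s, hs, rfl⟩
    exact EReal.coe_le_coe_iff.2 (le_csSup hbdd hs)
  · exact le_sSup ⟨_, (isClosed_msupp μ).csSup_mem hne hbdd, rfl⟩

lemma sSupE_of_unbdd (h : ¬ BddAbove (msupp μ)) :
    sSup (Real.toEReal '' msupp μ) = ⊤ := by
  rw [sSup_eq_top]
  intro b hb
  have hall : ∀ x : ℝ, ∃ s ∈ msupp μ, x < s := by
    intro x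
    by_contra hc
    push_neg at hc
    exact h ⟨x, fun s hs => hc s hs⟩
  induction b with
  | top => exact absurd hb (lt_irrefl _)
  | coe r =>
    obtain ⟨s, hs, hsr⟩ := hall r
    exact ⟨(s : EReal), ⟨s, hs, rfl⟩, EReal.coe_lt_coe_iff.2 hsr⟩
  | bot =>
    obtain ⟨s, hs, -⟩ := hall 0
    exact ⟨(s : EReal), ⟨s, hs, rfl⟩, EReal.bot_lt_coe s⟩

lemma qE_mid {τ : ℝ} (h0 : 0 < τ) (h1 : τ < 1) :
    qE μ τ = ((quant μ τ : ℝ) : EReal) := by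
  rw [qE, if_neg (not_le.2 h0), if_neg (not_le.2 h1)]

lemma qE_zero : qE μ 0 = sInf (Real.toEReal '' msupp μ) := by
  rw [qE, if_pos le_rfl]

lemma qE_one : qE μ 1 = sSup (Real.toEReal '' msupp μ) := by
  rw [qE, if_neg (by norm_num), if_pos le_rfl]

lemma UBint {f : ℝ → ℝ} (hD : AssumpD μ f) (hnull : ∀ x : ℝ, μ {x} = 0)
    {α σ : ℝ} (hα : α ∈ Ioo (0:ℝ) 1) (h0 : 0 < σ) (h1 : σ < α) :
    ∃ a b : ℝ, (a : EReal) = qE μ σ ∧ (b : EReal) = qE μ (1 - α + σ) ∧ a ≤ b ∧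
      (μ (Icc a b)).toReal = 1 - α ∧ coreLen μ α σ = ((b - a : ℝ) : EReal) := by
  obtain ⟨hα0, hα1⟩ := hα
  have hσ1 : σ < 1 := h1.trans hα1
  have hm0 : 0 < 1 - α + σ := by linarith
  have hm1 : 1 - α + σ < 1 := by linarith
  have hqa := quant_spec μ hnull h0 hσ1
  have hqb := quant_spec μ hnull hm0 hm1
  refine ⟨quant μ σ, quant μ (1 - α + σ), (qE_mid μ h0 hσ1).symm, (qE_mid μ hm0 hm1).symm,
    ?_, ?_, ?_⟩
  · exact (hqa.2 _).2 (by rw [hqb.1]; linarith)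
  · rw [mass_Icc μ hnull ((hqa.2 _).2 (by rw [hqb.1]; linarith)), hqa.1, hqb.1]; ring
  · rw [coreLen, qE_mid μ h0 hσ1, qE_mid μ hm0 hm1, ← EReal.coe_sub]

lemma UBmid {f : ℝ → ℝ} (hD : AssumpD μ f) (hnull : ∀ x : ℝ, μ {x} = 0)
    {α σ : ℝ} (hα : α ∈ Ioo (0:ℝ) 1) (h0 : 0 ≤ σ) (h1 : σ ≤ α) :
    coreLen μ α σ = ⊤ ∨ ∃ a b : ℝ, (a : EReal) = qE μ σ ∧ (b : EReal) = qE μ (1 - α + σ) ∧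
      a ≤ b ∧ (μ (Icc a b)).toReal = 1 - α ∧ coreLen μ α σ = ((b - a : ℝ) : EReal) := by
  obtain ⟨hα0, hα1⟩ := hα
  have h1α0 : 0 < 1 - α := by linarith
  have h1α1 : 1 - α < 1 := by linarith
  rcases eq_or_lt_of_le h0 with h00 | h0pos
  · -- σ = 0
    subst h00
    by_cases hbdd : BddBelow (msupp μ)
    · right
      have hne := msupp_nonempty μ
      set m := sInf (msupp μ) with hmdef
      have hm : m ∈ msupp μ := (isClosed_msupp μ).csInf_mem hne hbdd
      set b := quant μ (1 - α) with hbdef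
      have hqb := quant_spec μ hnull h1α0 h1α1
      have hIio : μ (Iio m) = 0 := by
        have hsub : Iio m ⊆ (msupp μ)ᶜ := fun x hx hxs =>
          absurd (csInf_le hbdd hxs) (not_le.2 hx)
        exact measure_mono_null hsub (msupp_compl_null μ)
      have hFm : cdfR μ m = 0 := by
        have hIic : μ (Iic m) = 0 := by
          have h := measure_union_le (μ := μ) (Iio m) {m}
          rw [Iio_union_right, hIio, hnull m, add_zero] at h
          exact le_antisymm h zero_le
        rw [cdfR, hIic, ENNReal.toReal_zero]
      have hmb : m ≤ b := by
        by_contra hc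
        push_neg at hc
        have := mono_cdfR μ hc.le
        rw [hqb.1, hFm] at this
        linarith
      refine ⟨m, b, ?_, ?_, hmb, ?_, ?_⟩
      · rw [qE_zero, sInfE_of_bddBelow μ hne hbdd]
      · rw [add_zero, qE_mid μ h1α0 h1α1]
      · rw [mass_Icc μ hnull hmb, hqb.1, hFm, sub_zero]
      · rw [coreLen, add_zero, qE_mid μ h1α0 h1α1, qE_zero, sInfE_of_bddBelow μ hne hbdd,
          ← EReal.coe_sub]
    · left
      rw [coreLen, add_zero, qE_zero, sInfE_of_unbdd μ hbdd, qE_mid μ h1α0 h1α1]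
      exact EReal.coe_sub_bot _
  rcases eq_or_lt_of_le h1 with h11 | hσα
  · -- σ = α
    subst h11
    have hone : (1:ℝ) - σ + σ = 1 := by ring
    by_cases hbdd : BddAbove (msupp μ)
    · right
      have hne := msupp_nonempty μ
      set M := sSup (msupp μ) with hMdef
      have hM : M ∈ msupp μ := (isClosed_msupp μ).csSup_mem hne hbdd
      set a := quant μ σ with hadef
      have hqa := quant_spec μ hnull h0pos hα1
      have hIoi : μ (Ioi M) = 0 := by
        have hsub : Ioi M ⊆ (msupp μ)ᶜ := fun x hx hxs =>
          absurd (le_csSup hbdd hxs) (not_le.2 hx)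
        exact measure_mono_null hsub (msupp_compl_null μ)
      have hFM : cdfR μ M = 1 := by
        have hIic : μ (Iic M) = 1 := by
          have h := measure_compl measurableSet_Ioi (measure_ne_top μ (Ioi M))
          rw [compl_Ioi, hIoi, measure_univ, tsub_zero] at h
          exact h
        rw [cdfR, hIic, ENNReal.toReal_one]
      have haM : a ≤ M := (hqa.2 _).2 (by rw [hFM]; linarith)
      refine ⟨a, M, ?_, ?_, haM, ?_, ?_⟩
      · rw [qE_mid μ h0pos hα1]
      · rw [hone, qE_one, sSupE_of_bddAbove μ hne hbdd]
      · rw [mass_Icc μ hnull haM, hFM, hqa.1]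
      · rw [coreLen, hone, qE_one, sSupE_of_bddAbove μ hne hbdd, qE_mid μ h0pos hα1,
          ← EReal.coe_sub]
    · left
      rw [coreLen, hone, qE_one, sSupE_of_unbdd μ hbdd, qE_mid μ h0pos hα1]
      exact EReal.top_sub_coe _
  · exact Or.inr (UBint μ hD hnull ⟨hα0, hα1⟩ h0pos hσα)

lemma LB {f : ℝ → ℝ} (hD : AssumpD μ f) (hnull : ∀ x : ℝ, μ {x} = 0)
    {α c d : ℝ} (hα : α ∈ Ioo (0:ℝ) 1) (h : InClass μ α c d) :
    ∃ σ ∈ Icc (0:ℝ) α, coreLen μ α σ ≤ ((d - c : ℝ) : EReal) := by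
  obtain ⟨hα0, hα1⟩ := hα
  obtain ⟨hcd, hmass⟩ := h
  have hmass' : 1 - α ≤ cdfR μ d - cdfR μ c := by
    rw [← mass_Icc μ hnull hcd]; exact hmass
  set σ := cdfR μ d - (1 - α) with hσdef
  have hσ0 : 0 ≤ σ := by have := cdfR_nonneg μ c; linarith
  have hσα : σ ≤ α := by have := cdfR_le_one μ d; linarith
  have hFc : cdfR μ c ≤ σ := by linarith
  have h1ασ : 1 - α + σ = cdfR μ d := by rw [hσdef]; ring
  have hs2 : ∃ s ∈ msupp μ, c ≤ s := by
    have hne : μ (Icc c d) ≠ 0 := by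
      intro h0
      rw [h0, ENNReal.toReal_zero] at hmass
      linarith
    obtain ⟨s, hsI, hsupp⟩ := exists_mem_msupp μ hne
    exact ⟨s, hsupp, hsI.1⟩
  refine ⟨σ, ⟨hσ0, hσα⟩, ?_⟩
  have hupper : qE μ (1 - α + σ) ≤ (d : EReal) := by
    rcases lt_or_eq_of_le hσα with hlt | heq
    · rw [qE_mid μ (by linarith) (by linarith)]
      exact EReal.coe_le_coe_iff.2
        (((quant_spec μ hnull (by linarith) (by linarith)).2 d).2 (le_of_eq h1ασ))
    · have hone : (1:ℝ) - α + σ = 1 := by rw [← heq]; ring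
      have hFd : cdfR μ d = 1 := by rw [← h1ασ, hone]
      rw [hone, qE_one]
      refine sSup_le ?_
      rintro x ⟨s, hs, rfl⟩
      exact EReal.coe_le_coe_iff.2 (supp_subset_Iic μ hFd hs)
  have hlower : (c : EReal) ≤ qE μ σ := by
    rcases eq_or_lt_of_le hσ0 with heq | hlt
    · have hFc0 : cdfR μ c = 0 := le_antisymm (heq ▸ hFc) (cdfR_nonneg μ c)
      rw [← heq, qE_zero]
      refine le_sInf ?_
      rintro x ⟨s, hs, rfl⟩
      exact EReal.coe_le_coe_iff.2 (supp_subset_Ici μ hFc0 hs)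
    · rw [qE_mid μ hlt (hσα.trans_lt hα1)]
      exact EReal.coe_le_coe_iff.2 (le_quant μ hD hnull hlt (hσα.trans_lt hα1) hFc hs2)
  calc coreLen μ α σ = qE μ (1 - α + σ) - qE μ σ := rfl
    _ ≤ (d : EReal) - (c : EReal) := EReal.sub_le_sub hupper hlower
    _ = ((d - c : ℝ) : EReal) := by rw [EReal.coe_sub]

end Stmt1Proof

/-- under Assumption (D), every shortest interval in `I_{1-α}` has μ-mass
exactly `1-α` and is a quantile core `B_τ` for some `τ ∈ T*` (and its length equals `L*`);
conversely every `B_τ` with `τ ∈ T*` is a shortest interval in `I_{1-α}`. -/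
theorem stmt1 (α : ℝ) (hα : α ∈ Ioo (0:ℝ) 1) (μ : Measure ℝ) [IsProbabilityMeasure μ]
    (f : ℝ → ℝ) (hD : AssumpD μ f) :
    (∀ a b : ℝ, IsShortest μ α a b →
      (μ (Icc a b)).toReal = 1 - α ∧
      (∃ τ ∈ Tstar μ α, (a : EReal) = qE μ τ ∧ (b : EReal) = qE μ (1 - α + τ)) ∧
      ((b - a : ℝ) : EReal) = sInf ((fun σ => coreLen μ α σ) '' Icc 0 α)) ∧
    (∀ τ ∈ Tstar μ α, ∃ a b : ℝ,
      (a : EReal) = qE μ τ ∧ (b : EReal) = qE μ (1 - α + τ) ∧ IsShortest μ α a b) := by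
  classical
  have hnull : ∀ x : ℝ, μ {x} = 0 := fun x => by
    rw [hD.density]
    exact (MeasureTheory.withDensity_absolutelyContinuous volume _) (Real.volume_singleton)
  obtain ⟨hα0, hα1⟩ := hα
  constructor
  · -- Part 1
    intro a b hshort
    obtain ⟨⟨hab, hmass_ge⟩, hmin⟩ := hshort
    have hab' : a < b := by
      rcases lt_or_eq_of_le hab with h | h
      · exact h
      · exfalso
        rw [← h, Icc_self, hnull a, ENNReal.toReal_zero] at hmass_ge
        linarith
    have hmass : (μ (Icc a b)).toReal = 1 - α := by
      refine le_antisymm ?_ hmass_ge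
      by_contra hgt
      push_neg at hgt
      rw [Stmt1Proof.mass_Icc μ hnull hab] at hgt
      have hopen : IsOpen {t : ℝ | 1 - α < cdfR μ b - cdfR μ t} :=
        isOpen_lt continuous_const (continuous_const.sub (Stmt1Proof.cont_cdfR μ hnull))
      have hmem : {t : ℝ | 1 - α < cdfR μ b - cdfR μ t} ∈ nhds a := hopen.mem_nhds hgt
      have h2 : Ioc a b ∈ nhdsWithin a (Ioi a) := Ioc_mem_nhdsGT_of_mem ⟨le_rfl, hab'⟩
      obtain ⟨t, ht⟩ := Filter.nonempty_of_mem (inter_mem (nhdsWithin_le_nhds hmem) h2)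
      have hclass : InClass μ α t b :=
        ⟨ht.2.2, by rw [Stmt1Proof.mass_Icc μ hnull ht.2.2]; exact le_of_lt ht.1⟩
      have := hmin t b hclass
      linarith [ht.2.1]
    have hFab : cdfR μ b - cdfR μ a = 1 - α := by
      rw [← Stmt1Proof.mass_Icc μ hnull hab]; exact hmass
    set τ := cdfR μ a with hτ
    have hFb : cdfR μ b = 1 - α + τ := by linarith
    have hτ0 : 0 ≤ τ := Stmt1Proof.cdfR_nonneg μ a
    have hτα : τ ≤ α := by have := Stmt1Proof.cdfR_le_one μ b; linarith
    have hsI : ∃ s ∈ msupp μ, a ≤ s ∧ s ≤ b := by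
      have hne : μ (Icc a b) ≠ 0 := by
        intro h0
        rw [h0, ENNReal.toReal_zero] at hmass
        linarith
      obtain ⟨s, h1, h2⟩ := Stmt1Proof.exists_mem_msupp μ hne
      exact ⟨s, h2, h1.1, h1.2⟩
    have ha : (a : EReal) = qE μ τ := by
      rcases eq_or_lt_of_le hτ0 with h00 | h0pos
      · have hFa0 : cdfR μ a = 0 := hτ ▸ h00.symm
        have hsub := Stmt1Proof.supp_subset_Ici μ hFa0
        have hbdd : BddBelow (msupp μ) := ⟨a, hsub⟩
        have hne := Stmt1Proof.msupp_nonempty μ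
        have hm := (Stmt1Proof.isClosed_msupp μ).csInf_mem hne hbdd
        have ham : a ≤ sInf (msupp μ) := le_csInf hne fun s hs => hsub hs
        have hma : sInf (msupp μ) ≤ a := by
          by_contra hc
          push_neg at hc
          obtain ⟨s, hssupp, hsa, hsb⟩ := hsI
          have hmb : sInf (msupp μ) ≤ b := le_trans (csInf_le hbdd hssupp) hsb
          have hFm : cdfR μ (sInf (msupp μ)) = 0 := by
            have hIio : μ (Iio (sInf (msupp μ))) = 0 := by
              have hsub2 : Iio (sInf (msupp μ)) ⊆ (msupp μ)ᶜ := fun x hx hxs =>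
                absurd (csInf_le hbdd hxs) (not_le.2 hx)
              exact measure_mono_null hsub2 (Stmt1Proof.msupp_compl_null μ)
            have hIic : μ (Iic (sInf (msupp μ))) = 0 := by
              have h := measure_union_le (μ := μ) (Iio (sInf (msupp μ))) {sInf (msupp μ)}
              rw [Iio_union_right, hIio, hnull _, add_zero] at h
              exact le_antisymm h zero_le
            rw [cdfR, hIic, ENNReal.toReal_zero]
          have hclass : InClass μ α (sInf (msupp μ)) b :=
            ⟨hmb, by rw [Stmt1Proof.mass_Icc μ hnull hmb, hFm, hFb]; linarith⟩
          have := hmin (sInf (msupp μ)) b hclass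
          linarith
        rw [← h00, Stmt1Proof.qE_zero μ, Stmt1Proof.sInfE_of_bddBelow μ hne hbdd]
        exact_mod_cast congrArg Real.toEReal (le_antisymm ham hma)
      · have hspec := Stmt1Proof.quant_spec μ hnull h0pos (hτα.trans_lt hα1)
        have h1 : quant μ τ ≤ a := (hspec.2 a).2 (le_of_eq hτ)
        have h2 : a ≤ quant μ τ :=
          Stmt1Proof.le_quant μ hD hnull h0pos (hτα.trans_lt hα1) (le_of_eq hτ.symm)
            ⟨hsI.choose, hsI.choose_spec.1, hsI.choose_spec.2.1⟩
        rw [Stmt1Proof.qE_mid μ h0pos (hτα.trans_lt hα1)]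
        exact_mod_cast le_antisymm h2 h1
    have hb : (b : EReal) = qE μ (1 - α + τ) := by
      rcases eq_or_lt_of_le hτα with hEq | hlt
      · have hone : (1:ℝ) - α + τ = 1 := by rw [hEq]; ring
        have hFb1 : cdfR μ b = 1 := by rw [hFb, hone]
        have hsub := Stmt1Proof.supp_subset_Iic μ hFb1
        have hbddA : BddAbove (msupp μ) := ⟨b, hsub⟩
        have hne := Stmt1Proof.msupp_nonempty μ
        have hM := (Stmt1Proof.isClosed_msupp μ).csSup_mem hne hbddA
        have hMb : sSup (msupp μ) ≤ b := csSup_le hne hsub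
        have hbM : b ≤ sSup (msupp μ) := by
          by_contra hc
          push_neg at hc
          obtain ⟨s, hssupp, hsa, hsb⟩ := hsI
          have haM : a ≤ sSup (msupp μ) := hsa.trans (le_csSup hbddA hssupp)
          have hFM : cdfR μ (sSup (msupp μ)) = 1 := by
            have hIoi : μ (Ioi (sSup (msupp μ))) = 0 := by
              have hsub2 : Ioi (sSup (msupp μ)) ⊆ (msupp μ)ᶜ := fun x hx hxs =>
                absurd (le_csSup hbddA hxs) (not_le.2 hx)
              exact measure_mono_null hsub2 (Stmt1Proof.msupp_compl_null μ)
            have hIic : μ (Iic (sSup (msupp μ))) = 1 := by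
              have h := measure_compl (measurableSet_Ioi (a := sSup (msupp μ)))
                (measure_ne_top μ (Ioi (sSup (msupp μ))))
              rw [compl_Ioi, hIoi, measure_univ, tsub_zero] at h
              exact h
            rw [cdfR, hIic, ENNReal.toReal_one]
          have hclass : InClass μ α a (sSup (msupp μ)) :=
            ⟨haM, by rw [Stmt1Proof.mass_Icc μ hnull haM, hFM, ← hτ]; linarith [hEq]⟩
          have := hmin a (sSup (msupp μ)) hclass
          linarith
        rw [hone, Stmt1Proof.qE_one μ, Stmt1Proof.sSupE_of_bddAbove μ hne hbddA]
        exact_mod_cast le_antisymm hbM hMb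
      · have h0' : 0 < 1 - α + τ := by linarith
        have h1' : 1 - α + τ < 1 := by linarith
        have hspec := Stmt1Proof.quant_spec μ hnull h0' h1'
        have hle : quant μ (1 - α + τ) ≤ b := (hspec.2 b).2 (le_of_eq hFb.symm)
        have hge : b ≤ quant μ (1 - α + τ) :=
          Stmt1Proof.le_quant μ hD hnull h0' h1' (le_of_eq hFb)
            (Stmt1Proof.exists_supp_ge μ (by rw [hFb]; linarith))
        rw [Stmt1Proof.qE_mid μ h0' h1']
        exact_mod_cast le_antisymm hge hle
    have hcore : coreLen μ α τ = ((b - a : ℝ) : EReal) := by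
      rw [coreLen, ← ha, ← hb, ← EReal.coe_sub]
    have hτT : τ ∈ Tstar μ α := by
      refine ⟨⟨hτ0, hτα⟩, fun σ hσ => ?_⟩
      rcases Stmt1Proof.UBmid μ hD hnull ⟨hα0, hα1⟩ hσ.1 hσ.2 with htop |
        ⟨a', b', _, _, hab2, hmass2, hcore2⟩
      · rw [htop]; exact le_top
      · rw [hcore, hcore2]
        exact EReal.coe_le_coe_iff.2 (hmin a' b' ⟨hab2, le_of_eq hmass2.symm⟩)
    refine ⟨hmass, ⟨τ, hτT, ha, hb⟩, ?_⟩
    apply le_antisymm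
    · refine le_sInf ?_
      rintro x ⟨σ, hσ, rfl⟩
      rw [← hcore]
      exact hτT.2 σ hσ
    · exact sInf_le ⟨τ, hτT.1, hcore⟩
  · -- Part 2
    intro τ hτ
    obtain ⟨hIcc, hmin⟩ := hτ
    rcases Stmt1Proof.UBmid μ hD hnull ⟨hα0, hα1⟩ hIcc.1 hIcc.2 with htop |
      ⟨a, b, ha, hb, hab, hmass, hcore⟩
    · exfalso
      obtain ⟨a', b', _, _, _, _, hcore2⟩ :=
        Stmt1Proof.UBint μ hD hnull ⟨hα0, hα1⟩ (by linarith : (0:ℝ) < α / 2)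
          (by linarith : α / 2 < α)
      have hle := hmin (α / 2) ⟨by linarith, by linarith⟩
      rw [htop, hcore2, top_le_iff] at hle
      exact EReal.coe_ne_top _ hle
    · refine ⟨a, b, ha, hb, ⟨⟨hab, hmass.ge⟩, fun c d hcd => ?_⟩⟩
      obtain ⟨σ, hσIcc, hσle⟩ := Stmt1Proof.LB μ hD hnull ⟨hα0, hα1⟩ hcd
      have h1 : coreLen μ α τ ≤ ((d - c : ℝ) : EReal) := (hmin σ hσIcc).trans hσle
      rw [hcore] at h1
      exact EReal.coe_le_coe_iff.1 h1


end
end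

section
/- Suppose μ satisfies Assumption (D) and f is strictly unimodal with mode y₀. Then for every λ ∈ (0, f(y₀)), the superlevel set H_λ := {y : f(y) ≥ λ} is a connected closed interval; moreover, if λ is chosen so that μ(H_λ) = 1−α, then H_λ = B_{τ*}, where τ* is the unique minimizer of L_τ over [0,α]. Thus in the strictly unimodal regime the mass-(1−α) highest-density region coincides with the shortest interval in I_{1−α}. -/
open MeasureTheory Set Filter

noncomputable section

/-! ### Auxiliary lemmas -/

section Aux

set_option linter.unusedSectionVars false
set_option linter.unusedVariables false

lemma isClosed_msupp (μ : Measure ℝ) : IsClosed (msupp μ) := by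
  rw [← isOpen_compl_iff, isOpen_iff_mem_nhds]
  intro y hy
  simp only [mem_compl_iff, msupp, mem_setOf_eq, not_forall] at hy
  obtain ⟨U, hU, hμU⟩ := hy
  obtain ⟨V, hVU, hVopen, hyV⟩ := mem_nhds_iff.1 hU
  refine Filter.mem_of_superset (hVopen.mem_nhds hyV) ?_
  intro z hz
  simp only [mem_compl_iff, msupp, mem_setOf_eq, not_forall]
  exact ⟨V, hVopen.mem_nhds hz, fun h => absurd (h.trans_le (measure_mono hVU)) (by simpa using hμU)⟩

lemma measure_compl_msupp (μ : Measure ℝ) : μ (msupp μ)ᶜ = 0 := by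
  refine measure_null_of_locally_null _ (fun x hx => ?_)
  simp only [mem_compl_iff, msupp, mem_setOf_eq, not_forall] at hx
  obtain ⟨U, hU, hμU⟩ := hx
  exact ⟨U, mem_nhdsWithin_of_mem_nhds hU, by simpa using hμU⟩

lemma atom_zero {μ : Measure ℝ} {f : ℝ → ℝ}
    (hden : μ = MeasureTheory.volume.withDensity (fun y => ENNReal.ofReal (f y))) (x : ℝ) :
    μ {x} = 0 := by
  rw [hden, withDensity_apply _ (measurableSet_singleton x)]
  exact setLIntegral_measure_zero _ _ Real.volume_singleton

variable {μ : Measure ℝ} {f : ℝ → ℝ} {α τ : ℝ}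

lemma meas_eq (hmeas : Measurable f)
    (hden : μ = MeasureTheory.volume.withDensity (fun y => ENNReal.ofReal (f y)))
    {s : Set ℝ} (hs : MeasurableSet s) :
    μ s = ∫⁻ y in s, ENNReal.ofReal (f y) ∂volume := by
  rw [hden, withDensity_apply _ hs]

lemma mul_vol_le (hmeas : Measurable f)
    (hden : μ = MeasureTheory.volume.withDensity (fun y => ENNReal.ofReal (f y)))
    {s : Set ℝ} (hs : MeasurableSet s) {lam : ℝ} (hf : ∀ y ∈ s, lam ≤ f y) :
    ENNReal.ofReal lam * volume s ≤ μ s := by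
  rw [meas_eq hmeas hden hs, ← setLIntegral_const s (ENNReal.ofReal lam)]
  refine setLIntegral_mono (hmeas.ennreal_ofReal) (fun y hy => ?_)
  exact ENNReal.ofReal_le_ofReal (hf y hy)

lemma pos_of_subset_supp (hmeas : Measurable f)
    (hden : μ = MeasureTheory.volume.withDensity (fun y => ENNReal.ofReal (f y)))
    (hpos : ∀ y ∈ msupp μ, 0 < f y)
    {x y : ℝ} (hxy : x < y) (hsub : Ioo x y ⊆ msupp μ) : 0 < μ (Ioo x y) := by
  rw [meas_eq hmeas hden measurableSet_Ioo]
  rw [setLIntegral_pos_iff hmeas.ennreal_ofReal]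
  have : Ioo x y ⊆ Function.support (fun y => ENNReal.ofReal (f y)) ∩ Ioo x y := by
    intro z hz
    refine ⟨?_, hz⟩
    simp only [Function.mem_support, ne_eq, ENNReal.ofReal_eq_zero, not_le]
    exact hpos z (hsub hz)
  calc (0:ENNReal) < volume (Ioo x y) := by simp [Real.volume_Ioo, hxy]
    _ ≤ _ := measure_mono this

lemma cdfR_mono [IsFiniteMeasure μ] : Monotone (cdfR μ) := fun a b hab =>
  ENNReal.toReal_mono (measure_ne_top μ _) (measure_mono (Iic_subset_Iic.2 hab))

lemma meas_Iic_eq (μ : Measure ℝ) [IsFiniteMeasure μ] (y : ℝ) :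
    μ (Iic y) = ENNReal.ofReal (cdfR μ y) := (ENNReal.ofReal_toReal (measure_ne_top μ _)).symm

lemma meas_Ioc_eq (μ : Measure ℝ) [IsFiniteMeasure μ] {a b : ℝ} (hab : a ≤ b) :
    μ (Ioc a b) = μ (Iic b) - μ (Iic a) := by
  rw [← Iic_sdiff_Iic]
  exact measure_diff (Iic_subset_Iic.2 hab) measurableSet_Iic.nullMeasurableSet (measure_ne_top μ _)

lemma toReal_Ioc (μ : Measure ℝ) [IsFiniteMeasure μ] {a b : ℝ} (hab : a ≤ b) :
    (μ (Ioc a b)).toReal = cdfR μ b - cdfR μ a := by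
  rw [meas_Ioc_eq μ hab, ENNReal.toReal_sub_of_le (measure_mono (Iic_subset_Iic.2 hab))
    (measure_ne_top μ _)]
  rfl

lemma toReal_Icc (hatom : ∀ x : ℝ, μ {x} = 0) [IsFiniteMeasure μ] {a b : ℝ} (hab : a ≤ b) :
    (μ (Icc a b)).toReal = cdfR μ b - cdfR μ a := by
  rw [← toReal_Ioc μ hab, measure_congr (Ioc_ae_eq_Icc' (hatom a))]

lemma exists_cdfR_lt [IsProbabilityMeasure μ] (h0 : 0 < τ) : ∃ z : ℝ, cdfR μ z < τ := by
  have hinter : ⋂ n : ℕ, Iic (-(n:ℝ)) = (∅ : Set ℝ) := by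
    ext z
    simp only [mem_iInter, mem_Iic, mem_empty_iff_false, iff_false, not_forall, not_le]
    obtain ⟨n, hn⟩ := exists_nat_gt (-z)
    exact ⟨n, by linarith⟩
  have ht := tendsto_measure_iInter_atTop (μ := μ) (s := fun n : ℕ => Iic (-(n:ℝ)))
    (fun n => measurableSet_Iic.nullMeasurableSet)
    (fun m n hmn => Iic_subset_Iic.2 (by simpa using (Nat.cast_le (α := ℝ)).2 hmn))
    ⟨0, measure_ne_top μ _⟩
  rw [hinter, measure_empty] at ht
  have := (ht.eventually_lt_const (by simp [h0] : (0:ENNReal) < ENNReal.ofReal τ)).exists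
  obtain ⟨n, hn⟩ := this
  refine ⟨-(n:ℝ), ?_⟩
  have := ENNReal.toReal_strict_mono (by simp) hn
  simpa [cdfR, ENNReal.toReal_ofReal h0.le] using this

lemma exists_cdfR_ge [IsProbabilityMeasure μ] (h1 : τ < 1) : ∃ z : ℝ, τ ≤ cdfR μ z := by
  have ht := tendsto_measure_Iic_atTop (μ := μ)
  rw [measure_univ] at ht
  have : ∀ᶠ x : ℝ in atTop, ENNReal.ofReal τ < μ (Iic x) :=
    ht.eventually_const_lt (ENNReal.ofReal_lt_one.2 h1)
  obtain ⟨z, hz⟩ := this.exists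
  exact ⟨z, by unfold cdfR; rw [← ENNReal.ofReal_le_iff_le_toReal (measure_ne_top μ _)]; exact hz.le⟩

lemma bddBelow_quantSet [IsProbabilityMeasure μ] (h0 : 0 < τ) :
    BddBelow {y : ℝ | τ ≤ cdfR μ y} := by
  obtain ⟨z, hz⟩ := exists_cdfR_lt (μ := μ) h0
  refine ⟨z, fun y hy => ?_⟩
  by_contra h
  push_neg at h
  exact absurd (le_trans hy (cdfR_mono h.le)) (not_le.2 hz)

lemma nonempty_quantSet [IsProbabilityMeasure μ] (h1 : τ < 1) :
    {y : ℝ | τ ≤ cdfR μ y}.Nonempty := exists_cdfR_ge h1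

lemma cdfR_lt_of_lt_quant [IsProbabilityMeasure μ] (h0 : 0 < τ) {y : ℝ}
    (hy : y < quant μ τ) : cdfR μ y < τ := by
  by_contra h
  push_neg at h
  exact absurd (csInf_le (bddBelow_quantSet h0) h) (not_le.2 hy)

lemma le_cdfR_quant [IsProbabilityMeasure μ] (h0 : 0 < τ) (h1 : τ < 1) :
    τ ≤ cdfR μ (quant μ τ) := by
  set q := quant μ τ with hq
  have key : ∀ n : ℕ, ENNReal.ofReal τ ≤ μ (Iic (q + 1/(n+1))) := by
    intro n
    have hlt : q < q + 1/((n:ℝ)+1) := by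
      have : (0:ℝ) < 1/((n:ℝ)+1) := by positivity
      linarith
    obtain ⟨y, hy, hyl⟩ := (csInf_lt_iff (bddBelow_quantSet h0) (nonempty_quantSet h1)).1 hlt
    rw [meas_Iic_eq]
    exact ENNReal.ofReal_le_ofReal (le_trans hy (cdfR_mono hyl.le))
  have hinter : ⋂ n : ℕ, Iic (q + 1/((n:ℝ)+1)) = Iic q := by
    ext z
    simp only [mem_iInter, mem_Iic]
    constructor
    · intro h
      by_contra hzq
      push_neg at hzq
      obtain ⟨n, hn⟩ := exists_nat_one_div_lt (sub_pos.2 hzq)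
      exact absurd (h n) (by push_neg; linarith)
    · intro h n
      have : (0:ℝ) < 1/((n:ℝ)+1) := by positivity
      linarith
  have ht := tendsto_measure_iInter_atTop (μ := μ) (s := fun n : ℕ => Iic (q + 1/((n:ℝ)+1)))
    (fun n => measurableSet_Iic.nullMeasurableSet)
    (fun m n hmn => Iic_subset_Iic.2 (by
      have : 1/((n:ℝ)+1) ≤ 1/((m:ℝ)+1) := by
        apply one_div_le_one_div_of_le (by positivity)
        have : (m:ℝ) ≤ (n:ℝ) := Nat.cast_le.2 hmn
        linarith
      linarith))
    ⟨0, measure_ne_top μ _⟩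
  rw [hinter] at ht
  have : ENNReal.ofReal τ ≤ μ (Iic q) := ge_of_tendsto ht (Eventually.of_forall key)
  rwa [ENNReal.ofReal_le_iff_le_toReal (measure_ne_top μ _)] at this

lemma cdfR_quant_le [IsProbabilityMeasure μ] (hatom : ∀ x : ℝ, μ {x} = 0)
    (h0 : 0 < τ) : cdfR μ (quant μ τ) ≤ τ := by
  set q := quant μ τ with hq
  have key : ∀ n : ℕ, μ (Iic (q - 1/((n:ℝ)+1))) ≤ ENNReal.ofReal τ := by
    intro n
    have hlt : q - 1/((n:ℝ)+1) < q := by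
      have : (0:ℝ) < 1/((n:ℝ)+1) := by positivity
      linarith
    have := cdfR_lt_of_lt_quant h0 hlt
    rw [meas_Iic_eq]
    exact ENNReal.ofReal_le_ofReal this.le
  have hunion : ⋃ n : ℕ, Iic (q - 1/((n:ℝ)+1)) = Iio q := by
    ext z
    simp only [mem_iUnion, mem_Iic, mem_Iio]
    constructor
    · rintro ⟨n, hn⟩
      have : (0:ℝ) < 1/((n:ℝ)+1) := by positivity
      linarith
    · intro h
      obtain ⟨n, hn⟩ := exists_nat_one_div_lt (sub_pos.2 h)
      exact ⟨n, by linarith⟩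
  have ht := tendsto_measure_iUnion_atTop (μ := μ) (s := fun n : ℕ => Iic (q - 1/((n:ℝ)+1)))
    (fun m n hmn => Iic_subset_Iic.2 (by
      have : 1/((n:ℝ)+1) ≤ 1/((m:ℝ)+1) := by
        apply one_div_le_one_div_of_le (by positivity)
        have : (m:ℝ) ≤ (n:ℝ) := Nat.cast_le.2 hmn
        linarith
      linarith))
  rw [hunion] at ht
  have hio : μ (Iio q) ≤ ENNReal.ofReal τ := le_of_tendsto ht (Eventually.of_forall key)
  have : μ (Iic q) ≤ ENNReal.ofReal τ := by
    calc μ (Iic q) ≤ μ (Iio q) + μ {q} := by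
          rw [← Iio_union_right]; exact measure_union_le _ _
      _ ≤ ENNReal.ofReal τ := by rw [hatom q, add_zero]; exact hio
  unfold cdfR
  calc (μ (Iic q)).toReal ≤ (ENNReal.ofReal τ).toReal :=
        ENNReal.toReal_mono ENNReal.ofReal_ne_top this
    _ = τ := ENNReal.toReal_ofReal h0.le

lemma superlevel_eq_Icc [IsProbabilityMeasure μ] (hD : AssumpD μ f)
    {y0 lam : ℝ} (hfc : ContinuousOn f (msupp μ)) (huni : StrictUnimodalAt μ f y0)
    (hlam : lam ∈ Ioo (0:ℝ) (f y0)) :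
    msupp μ ∩ {y : ℝ | lam ≤ f y} = Icc (sInf (msupp μ ∩ {y : ℝ | lam ≤ f y}))
      (sSup (msupp μ ∩ {y : ℝ | lam ≤ f y})) := by
  set S := msupp μ ∩ {y : ℝ | lam ≤ f y} with hS
  have hne : y0 ∈ S := ⟨huni.1, hlam.2.le⟩
  have hOC : S.OrdConnected := by
    constructor
    intro x hx z hz y hy
    have hysupp : y ∈ msupp μ := hD.interval.out hx.1 hz.1 hy
    refine ⟨hysupp, ?_⟩
    rcases le_total y y0 with h | h
    · have : f x ≤ f y := (huni.2.1.monotoneOn) ⟨hx.1, hy.1.trans h⟩ ⟨hysupp, h⟩ hy.1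
      exact le_trans hx.2 this
    · have : f z ≤ f y := (huni.2.2.antitoneOn) ⟨hysupp, h⟩ ⟨hz.1, h.trans hy.2⟩ hy.2
      exact le_trans hz.2 this
  have hclosed : IsClosed S := by
    have : S = msupp μ ∩ f ⁻¹' (Ici lam) := rfl
    rw [this]
    exact hfc.preimage_isClosed_of_isClosed (isClosed_msupp μ) isClosed_Ici
  have hvol : volume S ≠ ⊤ := by
    intro htop
    have h1 : ENNReal.ofReal lam * volume S ≤ μ S :=
      mul_vol_le hD.meas hD.density hclosed.measurableSet (fun y hy => hy.2)
    rw [htop, ENNReal.mul_top (by simp [hlam.1] : ENNReal.ofReal lam ≠ 0)] at h1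
    exact absurd (le_trans h1 (measure_mono (subset_univ S))) (by simp)
  have hba : BddAbove S := by
    by_contra hb
    obtain ⟨y, hyS, hygt⟩ := not_bddAbove_iff.1 hb (y0 + (volume S).toReal + 1)
    have hsub : Icc y0 y ⊆ S := hOC.out hne hyS
    have : ENNReal.ofReal (y - y0) ≤ volume S := by
      rw [← Real.volume_Icc]
      exact measure_mono hsub
    rw [← ENNReal.ofReal_toReal hvol, ENNReal.ofReal_le_ofReal_iff ENNReal.toReal_nonneg] at this
    linarith
  have hbb : BddBelow S := by
    by_contra hb
    obtain ⟨y, hyS, hylt⟩ := not_bddBelow_iff.1 hb (y0 - (volume S).toReal - 1)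
    have hsub : Icc y y0 ⊆ S := hOC.out hyS hne
    have : ENNReal.ofReal (y0 - y) ≤ volume S := by
      rw [← Real.volume_Icc]
      exact measure_mono hsub
    rw [← ENNReal.ofReal_toReal hvol, ENNReal.ofReal_le_ofReal_iff ENNReal.toReal_nonneg] at this
    linarith
  exact eq_Icc_of_connected_compact ⟨⟨y0, hne⟩, hOC.isPreconnected⟩
    (Metric.isCompact_of_isClosed_isBounded hclosed
      (isBounded_iff_bddBelow_bddAbove.2 ⟨hbb, hba⟩))

lemma ae_zero_off_supp (hmeas : Measurable f)
    (hden : μ = MeasureTheory.volume.withDensity (fun y => ENNReal.ofReal (f y))) :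
    ∀ᵐ y ∂(volume : Measure ℝ), y ∉ msupp μ → ENNReal.ofReal (f y) = 0 := by
  have hms : MeasurableSet (msupp μ)ᶜ := (isClosed_msupp μ).measurableSet.compl
  have h0 : ∫⁻ y in (msupp μ)ᶜ, ENNReal.ofReal (f y) ∂volume = 0 := by
    rw [← meas_eq hmeas hden hms]; exact measure_compl_msupp μ
  have := (lintegral_eq_zero_iff hmeas.ennreal_ofReal).1 h0
  exact (ae_restrict_iff' hms).1 this

/-- Key comparison: the superlevel interval `[a,b]` is shortest, with equality only for itself. -/
lemma hdr_compare [IsProbabilityMeasure μ] {lam a b : ℝ} (hmeas : Measurable f)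
    (hden : μ = MeasureTheory.volume.withDensity (fun y => ENNReal.ofReal (f y)))
    (hlam0 : 0 < lam) (h1α : 0 < 1 - α) (hab : a ≤ b)
    (hfS : ∀ y ∈ Icc a b, lam ≤ f y)
    (hflt : ∀ y ∈ msupp μ, y ∉ Icc a b → f y < lam)
    (hμS : μ (Icc a b) = ENNReal.ofReal (1 - α))
    {c d : ℝ} (hcd : c ≤ d) (hμC : ENNReal.ofReal (1 - α) ≤ μ (Icc c d)) :
    b - a ≤ d - c ∧ (d - c ≤ b - a → c = a ∧ d = b) := by
  set E₁ := Icc a b \ Icc c d with hE₁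
  set E₂ := Icc c d \ Icc a b with hE₂
  have hE₁m : MeasurableSet E₁ := measurableSet_Icc.diff measurableSet_Icc
  have hE₂m : MeasurableSet E₂ := measurableSet_Icc.diff measurableSet_Icc
  have hsplit1 : μ (Icc a b ∩ Icc c d) + μ E₁ = μ (Icc a b) :=
    measure_inter_add_diff _ measurableSet_Icc
  have hsplit2 : μ (Icc a b ∩ Icc c d) + μ E₂ = μ (Icc c d) := by
    rw [inter_comm]; exact measure_inter_add_diff _ measurableSet_Icc
  have hμ12 : μ E₁ ≤ μ E₂ := by
    have h := hμS ▸ hμC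
    rw [← hsplit1, ← hsplit2] at h
    exact (ENNReal.add_le_add_iff_left (measure_ne_top μ _)).1 h
  have claim1 : ENNReal.ofReal lam * volume E₁ ≤ μ E₁ :=
    mul_vol_le hmeas hden hE₁m (fun y hy => hfS y hy.1)
  have haele : ∀ᵐ y ∂(volume : Measure ℝ), y ∈ E₂ → ENNReal.ofReal (f y) ≤ ENNReal.ofReal lam := by
    filter_upwards [ae_zero_off_supp hmeas hden] with y h0 hyE2
    by_cases hy : y ∈ msupp μ
    · exact ENNReal.ofReal_le_ofReal (hflt y hy hyE2.2).le
    · rw [h0 hy]; exact zero_le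
  have claim2 : μ E₂ ≤ ENNReal.ofReal lam * volume E₂ := by
    rw [meas_eq hmeas hden hE₂m, ← setLIntegral_const E₂ (ENNReal.ofReal lam)]
    exact setLIntegral_mono_ae aemeasurable_const haele
  have hvolC : volume (Icc c d) ≠ ⊤ := by rw [Real.volume_Icc]; exact ENNReal.ofReal_ne_top
  have hvolS : volume (Icc a b) ≠ ⊤ := by rw [Real.volume_Icc]; exact ENNReal.ofReal_ne_top
  have hvE₂ : volume E₂ ≠ ⊤ := fun h => hvolC (top_le_iff.1 (h ▸ measure_mono diff_subset))
  have hvE₁ : volume E₁ ≠ ⊤ := fun h => hvolS (top_le_iff.1 (h ▸ measure_mono diff_subset))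
  have hlamne : ENNReal.ofReal lam ≠ 0 := by simp [hlam0]
  have chain : ENNReal.ofReal lam * volume E₁ ≤ ENNReal.ofReal lam * volume E₂ :=
    claim1.trans (hμ12.trans claim2)
  have hvol12 : volume E₁ ≤ volume E₂ :=
    (ENNReal.mul_le_mul_iff_right hlamne ENNReal.ofReal_ne_top).1 chain
  have hvsplit1 : volume (Icc a b ∩ Icc c d) + volume E₁ = volume (Icc a b) :=
    measure_inter_add_diff _ measurableSet_Icc
  have hvsplit2 : volume (Icc a b ∩ Icc c d) + volume E₂ = volume (Icc c d) := by
    rw [inter_comm]; exact measure_inter_add_diff _ measurableSet_Icc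
  have hvolSC : volume (Icc a b) ≤ volume (Icc c d) := by
    rw [← hvsplit1, ← hvsplit2]
    exact add_le_add_right hvol12 _
  have hmain : b - a ≤ d - c := by
    rw [Real.volume_Icc, Real.volume_Icc] at hvolSC
    exact (ENNReal.ofReal_le_ofReal_iff (by linarith)).1 hvolSC
  refine ⟨hmain, fun hle => ?_⟩
  have hdc : d - c = b - a := le_antisymm hle hmain
  have hvolCS : volume (Icc c d) = volume (Icc a b) := by
    rw [Real.volume_Icc, Real.volume_Icc, hdc]
  have hvIne : volume (Icc a b ∩ Icc c d) ≠ ⊤ :=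
    fun h => hvolS (top_le_iff.1 (h ▸ measure_mono inter_subset_left))
  have hvol21 : volume E₂ ≤ volume E₁ := by
    have h2 := hvolCS.le
    rw [← hvsplit1, ← hvsplit2] at h2
    exact (ENNReal.add_le_add_iff_left hvIne).1 h2
  have hvoleq : volume E₁ = volume E₂ := le_antisymm hvol12 hvol21
  have hμE2eq : μ E₂ = ENNReal.ofReal lam * volume E₂ := by
    refine le_antisymm claim2 ?_
    calc ENNReal.ofReal lam * volume E₂ = ENNReal.ofReal lam * volume E₁ := by rw [hvoleq]
      _ ≤ μ E₁ := claim1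
      _ ≤ μ E₂ := hμ12
  have hvE₂0 : volume E₂ = 0 := by
    by_contra hvne
    have hint : ∫⁻ y in E₂, ENNReal.ofReal (f y) ∂volume
        = ∫⁻ _ in E₂, ENNReal.ofReal lam ∂volume := by
      rw [← meas_eq hmeas hden hE₂m, setLIntegral_const, hμE2eq]
    have hfin : ∫⁻ y in E₂, ENNReal.ofReal (f y) ∂volume ≠ ⊤ := by
      rw [← meas_eq hmeas hden hE₂m]; exact measure_ne_top μ _
    have heq := ae_eq_of_ae_le_of_lintegral_le
      ((ae_restrict_iff' hE₂m).2 haele) hfin aemeasurable_const hint.ge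
    have hstrict : ∀ᵐ y ∂(volume.restrict E₂),
        ENNReal.ofReal (f y) < ENNReal.ofReal lam := by
      filter_upwards [ae_restrict_of_ae (ae_zero_off_supp hmeas hden), ae_restrict_mem hE₂m]
        with y h0 hyE2
      by_cases hy : y ∈ msupp μ
      · exact (ENNReal.ofReal_lt_ofReal_iff hlam0).2 (hflt y hy hyE2.2)
      · rw [h0 hy]; exact ENNReal.ofReal_pos.2 hlam0
    have hfalse : ∀ᵐ _ ∂(volume.restrict E₂), False := by
      filter_upwards [heq, hstrict] with y h1 h2
      exact absurd h1 h2.ne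
    have : (volume.restrict E₂) univ = 0 := by
      have := ae_iff.1 hfalse
      simpa using this
    rw [Measure.restrict_apply_univ] at this
    exact hvne this
  have hvE₁0 : volume E₁ = 0 := hvoleq.trans hvE₂0
  have haneb : a < b := by
    rcases lt_or_eq_of_le hab with h | h
    · exact h
    · exfalso
      have hz : μ (Icc a b) = 0 := by rw [← h, Icc_self]; exact atom_zero hden a
      rw [hμS] at hz
      simp only [ENNReal.ofReal_eq_zero] at hz
      linarith
  have hcned : c < d := by
    rcases lt_or_eq_of_le hcd with h | h
    · exact h
    · exfalso
      have h0 : μ (Icc c d) = 0 := by rw [h, Icc_self]; exact atom_zero hden d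
      rw [h0] at hμC
      simp only [nonpos_iff_eq_zero, ENNReal.ofReal_eq_zero] at hμC
      linarith
  have hac : a ≤ c := by
    by_contra h
    push_neg at h
    have hsub : Ico c (min a d) ⊆ E₂ := by
      intro y hy
      have h1 : y < a := lt_of_lt_of_le hy.2 (min_le_left _ _)
      exact ⟨⟨hy.1, le_of_lt (lt_of_lt_of_le hy.2 (min_le_right _ _))⟩,
        fun hmem => absurd hmem.1 (not_le.2 h1)⟩
    have h0 : volume (Ico c (min a d)) = 0 := measure_mono_null hsub hvE₂0
    rw [Real.volume_Ico, ENNReal.ofReal_eq_zero] at h0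
    have := lt_min h hcned
    linarith
  have hdb : d ≤ b := by
    by_contra h
    push_neg at h
    have hsub : Ioc (max b c) d ⊆ E₂ := by
      intro y hy
      have h1 : b < y := lt_of_le_of_lt (le_max_left _ _) hy.1
      exact ⟨⟨le_of_lt (lt_of_le_of_lt (le_max_right _ _) hy.1), hy.2⟩,
        fun hmem => absurd hmem.2 (not_le.2 h1)⟩
    have h0 : volume (Ioc (max b c) d) = 0 := measure_mono_null hsub hvE₂0
    rw [Real.volume_Ioc, ENNReal.ofReal_eq_zero] at h0
    have hmax : max b c < d := max_lt h hcned
    linarith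
  have hca : c = a := by
    by_contra h
    have hlt : a < c := lt_of_le_of_ne hac (Ne.symm h)
    have hsub : Ico a c ⊆ E₁ := by
      intro y hy
      exact ⟨⟨hy.1, le_trans hy.2.le (hcd.trans hdb)⟩, fun hmem => absurd hmem.1 (not_le.2 hy.2)⟩
    have h0 : volume (Ico a c) = 0 := measure_mono_null hsub hvE₁0
    rw [Real.volume_Ico, ENNReal.ofReal_eq_zero] at h0
    linarith
  have hdb' : d = b := by
    by_contra h
    have hlt : d < b := lt_of_le_of_ne hdb h
    have hsub : Ioc d b ⊆ E₁ := by
      intro y hy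
      exact ⟨⟨le_trans (hac.trans hcd) hy.1.le, hy.2⟩, fun hmem => absurd hmem.2 (not_le.2 hy.1)⟩
    have h0 : volume (Ioc d b) = 0 := measure_mono_null hsub hvE₁0
    rw [Real.volume_Ioc, ENNReal.ofReal_eq_zero] at h0
    linarith
  exact ⟨hca, hdb'⟩

lemma sInf_image_eq {s : Set ℝ} {x : ℝ} (hx : x ∈ s) (hlb : ∀ z ∈ s, x ≤ z) :
    sInf (Real.toEReal '' s) = (x : EReal) := by
  refine le_antisymm (sInf_le (mem_image_of_mem _ hx)) (le_sInf ?_)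
  rintro e ⟨z, hz, rfl⟩
  exact_mod_cast hlb z hz

lemma sSup_image_eq {s : Set ℝ} {x : ℝ} (hx : x ∈ s) (hub : ∀ z ∈ s, z ≤ x) :
    sSup (Real.toEReal '' s) = (x : EReal) := by
  refine le_antisymm (sSup_le ?_) (le_sSup (mem_image_of_mem _ hx))
  rintro e ⟨z, hz, rfl⟩
  exact_mod_cast hub z hz

lemma sInf_image_bot {s : Set ℝ} (hs : s.Nonempty) (h : ¬ BddBelow s) :
    sInf (Real.toEReal '' s) = ⊥ := by
  rw [sInf_eq_bot]
  intro e he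
  induction e using EReal.rec with
  | bot => exact absurd he (lt_irrefl _)
  | coe r =>
    obtain ⟨z, hz, hzr⟩ := not_bddBelow_iff.1 h r
    exact ⟨z, mem_image_of_mem _ hz, EReal.coe_lt_coe_iff.2 hzr⟩
  | top =>
    obtain ⟨z, hz⟩ := hs
    exact ⟨z, mem_image_of_mem _ hz, EReal.coe_lt_top z⟩

lemma sSup_image_top {s : Set ℝ} (hs : s.Nonempty) (h : ¬ BddAbove s) :
    sSup (Real.toEReal '' s) = ⊤ := by
  rw [sSup_eq_top]
  intro e he
  induction e using EReal.rec with
  | top => exact absurd he (lt_irrefl _)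
  | coe r =>
    obtain ⟨z, hz, hzr⟩ := not_bddAbove_iff.1 h r
    exact ⟨z, mem_image_of_mem _ hz, EReal.coe_lt_coe_iff.2 hzr⟩
  | bot =>
    obtain ⟨z, hz⟩ := hs
    exact ⟨z, mem_image_of_mem _ hz, EReal.bot_lt_coe z⟩

lemma meas_Ioc_pos (hmeas : Measurable f)
    (hden : μ = MeasureTheory.volume.withDensity (fun y => ENNReal.ofReal (f y)))
    (hint : (msupp μ).OrdConnected) (hpos : ∀ y ∈ msupp μ, 0 < f y)
    {w x : ℝ} (hw : w ∈ msupp μ) (hx : x ∈ msupp μ) (hwx : w < x)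
    {y : ℝ} (hy : y < x) : 0 < μ (Ioc y x) := by
  set t := max y w with ht
  have htx : t < x := max_lt hy hwx
  have hsub : Ioo t x ⊆ msupp μ := by
    intro z hz
    exact hint.out hw hx ⟨le_of_lt (lt_of_le_of_lt (le_max_right y w) hz.1), hz.2.le⟩
  calc (0:ENNReal) < μ (Ioo t x) := pos_of_subset_supp hmeas hden hpos htx hsub
    _ ≤ μ (Ioc y x) := measure_mono (fun z hz => ⟨lt_of_le_of_lt (le_max_left y w) hz.1, hz.2.le⟩)

lemma cdfR_lt [IsProbabilityMeasure μ] (hmeas : Measurable f)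
    (hden : μ = MeasureTheory.volume.withDensity (fun y => ENNReal.ofReal (f y)))
    (hint : (msupp μ).OrdConnected) (hpos : ∀ y ∈ msupp μ, 0 < f y)
    {w x : ℝ} (hw : w ∈ msupp μ) (hx : x ∈ msupp μ) (hwx : w < x)
    {y : ℝ} (hy : y < x) : cdfR μ y < cdfR μ x := by
  have h := meas_Ioc_pos hmeas hden hint hpos hw hx hwx hy
  have h2 : (μ (Ioc y x)).toReal > 0 :=
    ENNReal.toReal_pos h.ne' (measure_ne_top μ _)
  rw [toReal_Ioc μ hy.le] at h2
  linarith

lemma quant_cdfR_eq [IsProbabilityMeasure μ] (hmeas : Measurable f)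
    (hden : μ = MeasureTheory.volume.withDensity (fun y => ENNReal.ofReal (f y)))
    (hint : (msupp μ).OrdConnected) (hpos : ∀ y ∈ msupp μ, 0 < f y)
    {w x : ℝ} (hw : w ∈ msupp μ) (hx : x ∈ msupp μ) (hwx : w < x) :
    quant μ (cdfR μ x) = x := by
  have hmem : x ∈ {y : ℝ | cdfR μ x ≤ cdfR μ y} := le_refl (cdfR μ x)
  refine le_antisymm (csInf_le ⟨x, fun y hy => ?_⟩ hmem)
    (le_csInf ⟨x, hmem⟩ (fun y hy => ?_))
  · by_contra h
    push_neg at h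
    exact absurd hy (not_le.2 (cdfR_lt hmeas hden hint hpos hw hx hwx h))
  · by_contra h
    push_neg at h
    exact absurd hy (not_le.2 (cdfR_lt hmeas hden hint hpos hw hx hwx h))

lemma cdfR_zero_of_lb (hden : μ = MeasureTheory.volume.withDensity (fun y => ENNReal.ofReal (f y)))
    {x : ℝ} (hlb : ∀ z ∈ msupp μ, x ≤ z) : μ (Iic x) = 0 := by
  have hsub : Iic x ⊆ {x} ∪ (msupp μ)ᶜ := by
    intro z hz
    by_cases hzs : z ∈ msupp μ
    · left
      exact le_antisymm hz (hlb z hzs)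
    · exact Or.inr hzs
  refine measure_mono_null hsub ?_
  refine le_antisymm ?_ zero_le
  calc μ ({x} ∪ (msupp μ)ᶜ) ≤ μ {x} + μ (msupp μ)ᶜ := measure_union_le _ _
    _ = 0 := by rw [atom_zero hden, measure_compl_msupp]; simp

lemma cdfR_one_of_ub [IsProbabilityMeasure μ]
    (hden : μ = MeasureTheory.volume.withDensity (fun y => ENNReal.ofReal (f y)))
    {x : ℝ} (hub : ∀ z ∈ msupp μ, z ≤ x) : cdfR μ x = 1 := by
  have hIoi : μ (Ioi x) = 0 := by
    refine measure_mono_null (fun z hz => ?_) (measure_compl_msupp μ)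
    intro hzs
    exact absurd (hub z hzs) (not_le.2 hz)
  have : μ (Iic x) = 1 := by
    have h2 := measure_add_measure_compl (μ := μ) (measurableSet_Iic (a := x))
    rw [compl_Iic, hIoi, add_zero, measure_univ] at h2
    exact h2
  rw [cdfR, this]
  simp

lemma core_endpoints [IsProbabilityMeasure μ] (hmeas : Measurable f)
    (hden : μ = MeasureTheory.volume.withDensity (fun y => ENNReal.ofReal (f y)))
    (hint : (msupp μ).OrdConnected) (hpos : ∀ y ∈ msupp μ, 0 < f y)
    {y0 : ℝ} (hy0 : y0 ∈ msupp μ) (hα : α ∈ Set.Ioo (0:ℝ) 1)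
    (hτ : τ ∈ Set.Icc 0 α) (hfin : coreLen μ α τ ≠ ⊤) :
    ∃ u v : ℝ, qE μ τ = (u : EReal) ∧ qE μ (1 - α + τ) = (v : EReal) ∧
      coreLen μ α τ = ((v - u : ℝ) : EReal) ∧ cdfR μ u = τ ∧ 1 - α + τ ≤ cdfR μ v ∧
      u ≤ v ∧ ENNReal.ofReal (1 - α) ≤ μ (Icc u v) := by
  have hatom : ∀ x : ℝ, μ {x} = 0 := atom_zero hden
  have h1α : 0 < 1 - α := by linarith [hα.2]
  have hτα1 : 1 - α + τ > 0 := by linarith [hτ.1]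
  have hcl : IsClosed (msupp μ) := isClosed_msupp μ
  have hsne : (msupp μ).Nonempty := ⟨y0, hy0⟩
  have hv : ∃ v : ℝ, qE μ (1 - α + τ) = (v : EReal) ∧ 1 - α + τ ≤ cdfR μ v := by
    by_cases htop : (1:ℝ) ≤ 1 - α + τ
    · have hqe : qE μ (1 - α + τ) = sSup (Real.toEReal '' msupp μ) := by
        rw [qE, if_neg (by linarith), if_pos htop]
      by_cases hbdd : BddAbove (msupp μ)
      · set q1 := sSup (msupp μ) with hq1
        have hq1mem : q1 ∈ msupp μ := hcl.csSup_mem hsne hbdd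
        have hub : ∀ z ∈ msupp μ, z ≤ q1 := fun z hz => le_csSup hbdd hz
        refine ⟨q1, hqe.trans (sSup_image_eq hq1mem hub), ?_⟩
        rw [cdfR_one_of_ub hden hub]
        linarith [hτ.2]
      · exfalso
        apply hfin
        rw [coreLen, hqe, sSup_image_top hsne hbdd]
        rw [qE, if_neg (by push_neg; linarith [hα.1] : ¬ τ ≤ 0)]
        · by_cases h1τ : (1:ℝ) ≤ τ
          · exact absurd h1τ (by linarith [hτ.2, hα.2])
          · rw [if_neg h1τ]
            exact EReal.top_sub_coe _
    · push_neg at htop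
      have hqe : qE μ (1 - α + τ) = ((quant μ (1 - α + τ) : ℝ) : EReal) := by
        rw [qE, if_neg (by linarith), if_neg (by linarith)]
      exact ⟨quant μ (1 - α + τ), hqe, le_cdfR_quant hτα1 htop⟩
  obtain ⟨v, hqev, hcdfv⟩ := hv
  have hu : ∃ u : ℝ, qE μ τ = (u : EReal) ∧ cdfR μ u = τ := by
    by_cases hbot : τ ≤ 0
    · have hτ0 : τ = 0 := le_antisymm hbot hτ.1
      have hqe : qE μ τ = sInf (Real.toEReal '' msupp μ) := by rw [qE, if_pos hbot]
      by_cases hbdd : BddBelow (msupp μ)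
      · set q0 := sInf (msupp μ) with hq0
        have hq0mem : q0 ∈ msupp μ := hcl.csInf_mem hsne hbdd
        have hlb : ∀ z ∈ msupp μ, q0 ≤ z := fun z hz => csInf_le hbdd hz
        refine ⟨q0, hqe.trans (sInf_image_eq hq0mem hlb), ?_⟩
        rw [cdfR, cdfR_zero_of_lb hden hlb, hτ0]
        simp
      · exfalso
        apply hfin
        rw [coreLen, hqe, sInf_image_bot hsne hbdd, EReal.sub_bot]
        rw [ne_eq, qE]
        by_cases htop : (1:ℝ) ≤ 1 - α + τ
        · rw [if_neg (by linarith), if_pos htop]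
          intro hcon
          have : ((y0 : ℝ) : EReal) ≤ sSup (Real.toEReal '' msupp μ) :=
            le_sSup (mem_image_of_mem _ hy0)
          rw [hcon] at this
          exact absurd this (by simp)
        · rw [if_neg (by linarith), if_neg htop]
          simp
    · push_neg at hbot
      have h1τ : τ < 1 := by linarith [hτ.2, hα.2]
      have hqe : qE μ τ = ((quant μ τ : ℝ) : EReal) := by
        rw [qE, if_neg (by linarith), if_neg (by linarith)]
      exact ⟨quant μ τ, hqe,
        le_antisymm (cdfR_quant_le hatom hbot) (le_cdfR_quant hbot h1τ)⟩
  obtain ⟨u, hqeu, hcdfu⟩ := hu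
  have huv : u ≤ v := by
    by_contra h
    push_neg at h
    have := cdfR_mono (μ := μ) h.le
    rw [hcdfu] at this
    linarith
  have hmass : ENNReal.ofReal (1 - α) ≤ μ (Icc u v) := by
    have h1 : (μ (Icc u v)).toReal = cdfR μ v - cdfR μ u := toReal_Icc hatom huv
    have h2 : 1 - α ≤ (μ (Icc u v)).toReal := by rw [h1, hcdfu]; linarith
    calc ENNReal.ofReal (1 - α) ≤ ENNReal.ofReal ((μ (Icc u v)).toReal) :=
          ENNReal.ofReal_le_ofReal h2
      _ = μ (Icc u v) := ENNReal.ofReal_toReal (measure_ne_top μ _)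
  refine ⟨u, v, hqeu, hqev, ?_, hcdfu, hcdfv, huv, hmass⟩
  rw [coreLen, hqeu, hqev, ← EReal.coe_sub]

end Aux

/-- under Assumption (D) and strict unimodality, every superlevel set
`H_λ = {y : f y ≥ λ}` (within the support) with `0 < λ < f(y₀)` is a connected closed
interval; and if `μ(H_λ) = 1-α` then `H_λ` equals the quantile core `B_{τ*}` for the
unique minimizer `τ*` of `L_τ` over `[0,α]`, hence the mass-(1-α) highest-density
region coincides with the shortest interval in `I_{1-α}`. -/
theorem stmt5 (α : ℝ) (hα : α ∈ Ioo (0:ℝ) 1) (μ : Measure ℝ) [IsProbabilityMeasure μ]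
    (f : ℝ → ℝ) (hD : AssumpD μ f)
    (y0 : ℝ) (hfc : ContinuousOn f (msupp μ)) (huni : StrictUnimodalAt μ f y0) :
    (∀ lam ∈ Ioo (0:ℝ) (f y0), ∃ a b : ℝ, a ≤ b ∧
        msupp μ ∩ {y : ℝ | lam ≤ f y} = Icc a b) ∧
    (∀ lam ∈ Ioo (0:ℝ) (f y0),
      (μ (msupp μ ∩ {y : ℝ | lam ≤ f y})).toReal = 1 - α →
      ∃ τs : ℝ, Tstar μ α = {τs} ∧
        msupp μ ∩ {y : ℝ | lam ≤ f y}
          = {y : ℝ | qE μ τs ≤ (y : EReal) ∧ (y : EReal) ≤ qE μ (1 - α + τs)} ∧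
        ∀ a b : ℝ, msupp μ ∩ {y : ℝ | lam ≤ f y} = Icc a b → IsShortest μ α a b) := by
  have hatom : ∀ x : ℝ, μ {x} = 0 := atom_zero hD.density
  have h1α : 0 < 1 - α := by linarith [hα.2]
  constructor
  · intro lam hlam
    have h := superlevel_eq_Icc hD hfc huni hlam
    refine ⟨_, _, ?_, h⟩
    have hy0 : y0 ∈ msupp μ ∩ {y : ℝ | lam ≤ f y} := ⟨huni.1, hlam.2.le⟩
    rw [h] at hy0
    exact nonempty_Icc.1 ⟨y0, hy0⟩
  · intro lam hlam hmass
    set S := msupp μ ∩ {y : ℝ | lam ≤ f y} with hSdef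
    have hEq : S = Icc (sInf S) (sSup S) := superlevel_eq_Icc hD hfc huni hlam
    set a := sInf S with hadef
    set b := sSup S with hbdef
    have hy0S : y0 ∈ S := ⟨huni.1, hlam.2.le⟩
    have habne : (Icc a b).Nonempty := hEq ▸ ⟨y0, hy0S⟩
    have hab : a ≤ b := nonempty_Icc.1 habne
    have hfS : ∀ y ∈ Icc a b, lam ≤ f y := by
      intro y hy
      have hy' : y ∈ S := by rw [hEq]; exact hy
      exact hy'.2
    have hSsub : ∀ y ∈ Icc a b, y ∈ msupp μ := by
      intro y hy
      have hy' : y ∈ S := by rw [hEq]; exact hy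
      exact hy'.1
    have hflt : ∀ y ∈ msupp μ, y ∉ Icc a b → f y < lam := by
      intro y hy hnot
      by_contra h
      push_neg at h
      have : y ∈ S := ⟨hy, h⟩
      rw [hEq] at this
      exact hnot this
    have hmassS : (μ (Icc a b)).toReal = 1 - α := by rw [← hEq]; exact hmass
    have hμS : μ (Icc a b) = ENNReal.ofReal (1 - α) := by
      rw [← hmassS, ENNReal.ofReal_toReal (measure_ne_top μ _)]
    have hcdfab : cdfR μ b - cdfR μ a = 1 - α := by
      rw [← toReal_Icc hatom hab, hmassS]
    set τs := cdfR μ a with hτsdef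
    have hτs0 : 0 ≤ τs := ENNReal.toReal_nonneg
    have hcdfb1 : cdfR μ b ≤ 1 := by
      have h1 := measure_mono (subset_univ (Iic b)) (μ := μ)
      rw [measure_univ] at h1
      calc (μ (Iic b)).toReal ≤ (1:ENNReal).toReal := ENNReal.toReal_mono (by simp) h1
        _ = 1 := by simp
    have hτsα : τs ≤ α := by
      rw [hτsdef]
      linarith
    have haS : a ∈ S := by rw [hEq]; exact ⟨le_refl a, hab⟩
    have hbS : b ∈ S := by rw [hEq]; exact ⟨hab, le_refl b⟩
    have haltb : a < b := by
      rcases lt_or_eq_of_le hab with h | h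
      · exact h
      · exfalso
        have hz : μ (Icc a b) = 0 := by rw [← h, Icc_self]; exact hatom a
        rw [hμS] at hz
        simp only [ENNReal.ofReal_eq_zero] at hz
        linarith
    have hqea : qE μ τs = (a : EReal) := by
      by_cases hτ0 : τs ≤ 0
      · have hτs00 : τs = 0 := le_antisymm hτ0 hτs0
        rw [qE, if_pos hτ0]
        have hlb : ∀ z ∈ msupp μ, a ≤ z := by
          intro z hz
          by_contra h
          push_neg at h
          have hpos : 0 < μ (Ioc z a) :=
            meas_Ioc_pos hD.meas hD.density hD.interval hD.pos hz haS.1 h h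
          have hle : μ (Ioc z a) ≤ μ (Iic a) := measure_mono Ioc_subset_Iic_self
          have hzero : μ (Iic a) = 0 := by
            rw [meas_Iic_eq, ← hτsdef, hτs00]
            simp
          rw [hzero] at hle
          exact absurd (lt_of_lt_of_le hpos hle) (lt_irrefl 0)
        exact sInf_image_eq haS.1 hlb
      · push_neg at hτ0
        rw [qE, if_neg (not_le.2 hτ0), if_neg (by push_neg; linarith [hα.2] : ¬ (1:ℝ) ≤ τs)]
        have hw : ∃ w ∈ msupp μ, w < a := by
          by_contra h
          push_neg at h
          have hz := cdfR_zero_of_lb hD.density h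
          have : τs = 0 := by rw [hτsdef, cdfR, hz]; simp
          linarith
        obtain ⟨w, hwsupp, hwa⟩ := hw
        have hq : quant μ τs = a := by
          rw [hτsdef]
          exact quant_cdfR_eq hD.meas hD.density hD.interval hD.pos hwsupp haS.1 hwa
        exact_mod_cast congrArg Real.toEReal hq
    have hqeb : qE μ (1 - α + τs) = (b : EReal) := by
      have hcb : cdfR μ b = 1 - α + τs := by rw [hτsdef]; linarith
      by_cases hτα : (1:ℝ) ≤ 1 - α + τs
      · rw [qE, if_neg (by linarith), if_pos hτα]
        have hcb1 : cdfR μ b = 1 := le_antisymm hcdfb1 (by linarith)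
        have hIicb : μ (Iic b) = 1 := by
          rw [meas_Iic_eq, hcb1]
          simp
        have hIoib : μ (Ioi b) = 0 := by
          have h2 := measure_add_measure_compl (μ := μ) (measurableSet_Iic (a := b))
          rw [compl_Iic, hIicb, measure_univ] at h2
          exact (ENNReal.add_right_inj (by simp)).1 (h2.trans (add_zero 1).symm)
        have hub : ∀ z ∈ msupp μ, z ≤ b := by
          intro z hz
          by_contra h
          push_neg at h
          have hpos : 0 < μ (Ioc b z) :=
            meas_Ioc_pos hD.meas hD.density hD.interval hD.pos hbS.1 hz h h
          have hle : μ (Ioc b z) ≤ μ (Ioi b) := measure_mono Ioc_subset_Ioi_self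
          rw [hIoib] at hle
          exact absurd (lt_of_lt_of_le hpos hle) (lt_irrefl 0)
        exact sSup_image_eq hbS.1 hub
      · push_neg at hτα
        rw [qE, if_neg (by linarith), if_neg (not_le.2 hτα)]
        have hq : quant μ (1 - α + τs) = b := by
          rw [← hcb]
          exact quant_cdfR_eq hD.meas hD.density hD.interval hD.pos haS.1 hbS.1 haltb
        exact_mod_cast congrArg Real.toEReal hq
    have hcoreτs : coreLen μ α τs = ((b - a : ℝ) : EReal) := by
      rw [coreLen, hqea, hqeb, ← EReal.coe_sub]
    have hshort : ∀ c d : ℝ, InClass μ α c d → b - a ≤ d - c := by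
      rintro c d ⟨hcd, hm⟩
      have hμC : ENNReal.ofReal (1 - α) ≤ μ (Icc c d) := by
        calc ENNReal.ofReal (1 - α) ≤ ENNReal.ofReal ((μ (Icc c d)).toReal) :=
              ENNReal.ofReal_le_ofReal hm
          _ = μ (Icc c d) := ENNReal.ofReal_toReal (measure_ne_top μ _)
      exact (hdr_compare hD.meas hD.density hlam.1 h1α hab hfS hflt hμS hcd hμC).1
    have hmin : ∀ σ ∈ Icc (0:ℝ) α, ((b - a : ℝ) : EReal) ≤ coreLen μ α σ := by
      intro σ hσ
      by_cases hfin : coreLen μ α σ = ⊤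
      · rw [hfin]; exact le_top
      · obtain ⟨u, v, _, _, hclen, hcdfu, hcdfv, huv, hmassuv⟩ :=
          core_endpoints hD.meas hD.density hD.interval hD.pos huni.1 hα hσ hfin
        rw [hclen, EReal.coe_le_coe_iff]
        exact (hdr_compare hD.meas hD.density hlam.1 h1α hab hfS hflt hμS huv hmassuv).1
    refine ⟨τs, ?_, ?_, ?_⟩
    · ext τ
      simp only [Tstar, mem_setOf_eq, mem_singleton_iff]
      constructor
      · rintro ⟨hτIcc, hτmin⟩
        have hcore : coreLen μ α τ ≤ ((b - a : ℝ) : EReal) := by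
          rw [← hcoreτs]
          exact hτmin τs ⟨hτs0, hτsα⟩
        have hfin : coreLen μ α τ ≠ ⊤ := by
          intro h
          rw [h, top_le_iff] at hcore
          exact EReal.coe_ne_top _ hcore
        obtain ⟨u, v, hqeu, hqev, hclen, hcdfu, hcdfv, huv, hmassuv⟩ :=
          core_endpoints hD.meas hD.density hD.interval hD.pos huni.1 hα hτIcc hfin
        rw [hclen, EReal.coe_le_coe_iff] at hcore
        have heq := (hdr_compare hD.meas hD.density hlam.1 h1α hab hfS hflt hμS
          huv hmassuv).2 hcore
        rw [← hcdfu, heq.1]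
      · rintro rfl
        exact ⟨⟨hτs0, hτsα⟩, fun σ hσ => by rw [hcoreτs]; exact hmin σ hσ⟩
    · rw [hEq, hqea, hqeb]
      ext y
      simp only [mem_Icc, mem_setOf_eq, EReal.coe_le_coe_iff]
    · intro a' b' hEq'
      have hEq2 : Icc a b = Icc a' b' := by rw [← hEq]; exact hEq'
      have hne' : (Icc a' b').Nonempty := hEq2 ▸ habne
      have ha'b' : a' ≤ b' := nonempty_Icc.1 hne'
      have h1 : a ∈ Icc a' b' := hEq2 ▸ (⟨le_refl a, hab⟩ : a ∈ Icc a b)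
      have h2 : a' ∈ Icc a b := hEq2.symm ▸ (⟨le_refl a', ha'b'⟩ : a' ∈ Icc a' b')
      have h3 : b ∈ Icc a' b' := hEq2 ▸ (⟨hab, le_refl b⟩ : b ∈ Icc a b)
      have h4 : b' ∈ Icc a b := hEq2.symm ▸ (⟨ha'b', le_refl b'⟩ : b' ∈ Icc a' b')
      have haa : a' = a := le_antisymm h1.1 h2.1
      have hbb : b' = b := le_antisymm h4.2 h3.2
      refine ⟨⟨ha'b', ?_⟩, ?_⟩
      · rw [← hEq2, hmassS]
      · intro c d hcd
        rw [haa, hbb]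
        exact hshort c d hcd

end
end

section
/- Let μ have density f, let λ > 0, and suppose the superlevel set H := {y : f(y) ≥ λ} equals [a₁,b₁] ∪ [a₂,b₂] with b₁ < a₂ and μ(H) = 1−α, and that sup_{y ∈ (b₁,a₂)} f(y) ≤ βλ for some β ∈ [0,1). Then every interval J = [u,v] with μ(J) ≥ 1−α that intersects both [a₁,b₁] and [a₂,b₂] satisfies v − u ≥ |H| + (1−β)(a₂−b₁), where |H| := (b₁−a₁) + (b₂−a₂). If moreover F(a₂⁻) := μ((−∞,a₂)) < 1−α and 1 − F(b₁) < 1−α, then the same lower bound holds for every interval in I_{1−α}, and every shortest interval in I_{1−α} has length strictly greater than |H|. -/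
open MeasureTheory Set Filter

noncomputable section

lemma stmt7_low (μ : Measure ℝ) [IsProbabilityMeasure μ] (f : ℝ → ℝ) (hf : Measurable f)
    (hdens : μ = MeasureTheory.volume.withDensity (fun y => ENNReal.ofReal (f y)))
    (c : ℝ) (hc : 0 ≤ c) (S : Set ℝ) (hS : MeasurableSet S) (h : ∀ y ∈ S, c ≤ f y) :
    c * (volume S).toReal ≤ (μ S).toReal := by
  have h1 : ENNReal.ofReal c * volume S ≤ μ S := by
    rw [hdens, withDensity_apply _ hS]
    calc ENNReal.ofReal c * volume S = ∫⁻ _ in S, ENNReal.ofReal c := (setLIntegral_const S _).symm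
    _ ≤ ∫⁻ y in S, ENNReal.ofReal (f y) :=
        setLIntegral_mono hf.ennreal_ofReal fun y hy => ENNReal.ofReal_le_ofReal (h y hy)
  have h2 := ENNReal.toReal_mono (measure_ne_top μ S) h1
  rwa [ENNReal.toReal_mul, ENNReal.toReal_ofReal hc] at h2

lemma stmt7_up (μ : Measure ℝ) [IsProbabilityMeasure μ] (f : ℝ → ℝ) (hf : Measurable f)
    (hdens : μ = MeasureTheory.volume.withDensity (fun y => ENNReal.ofReal (f y)))
    (c : ℝ) (hc : 0 ≤ c) (S : Set ℝ) (hS : MeasurableSet S) (hfin : volume S ≠ ⊤)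
    (h : ∀ y ∈ S, f y ≤ c) :
    (μ S).toReal ≤ c * (volume S).toReal := by
  have h1 : μ S ≤ ENNReal.ofReal c * volume S := by
    rw [hdens, withDensity_apply _ hS]
    calc ∫⁻ y in S, ENNReal.ofReal (f y) ≤ ∫⁻ _ in S, ENNReal.ofReal c :=
        setLIntegral_mono measurable_const fun y hy => ENNReal.ofReal_le_ofReal (h y hy)
    _ = ENNReal.ofReal c * volume S := setLIntegral_const S _
  have h2 := ENNReal.toReal_mono (ENNReal.mul_ne_top ENNReal.ofReal_ne_top hfin) h1
  rwa [ENNReal.toReal_mul, ENNReal.toReal_ofReal hc] at h2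

/-- connectedness cost for a disconnected highest-density region.
If the superlevel set `H = {f ≥ λ}` is the disjoint union of `[a₁,b₁]` and `[a₂,b₂]`
with mass exactly `1-α`, and the valley density is at most `βλ` with `β ∈ [0,1)`, then
every interval of mass at least `1-α` that meets both components has length at least
`|H| + (1-β)(a₂-b₁)`; if in addition neither side alone carries mass `1-α`, the same
bound holds for every interval in `I_{1-α}`, and every shortest interval in `I_{1-α}`
is strictly longer than `|H|`. -/
theorem stmt7 (α : ℝ) (hα : α ∈ Ioo (0:ℝ) 1) (μ : Measure ℝ) [IsProbabilityMeasure μ]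
    (f : ℝ → ℝ) (hf : Measurable f)
    (hdens : μ = MeasureTheory.volume.withDensity (fun y => ENNReal.ofReal (f y)))
    (lam : ℝ) (hlam : 0 < lam)
    (a1 b1 a2 b2 : ℝ) (h11 : a1 ≤ b1) (h22 : a2 ≤ b2) (h12 : b1 < a2)
    (hH : {y : ℝ | lam ≤ f y} = Icc a1 b1 ∪ Icc a2 b2)
    (hmass : (μ {y : ℝ | lam ≤ f y}).toReal = 1 - α)
    (β : ℝ) (hβ : β ∈ Ico (0:ℝ) 1)
    (hvalley : ∀ y ∈ Ioo b1 a2, f y ≤ β * lam) :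
    (∀ u v : ℝ, u ≤ v → 1 - α ≤ (μ (Icc u v)).toReal →
      (Icc u v ∩ Icc a1 b1).Nonempty → (Icc u v ∩ Icc a2 b2).Nonempty →
      (b1 - a1) + (b2 - a2) + (1 - β) * (a2 - b1) ≤ v - u) ∧
    ((μ (Iio a2)).toReal < 1 - α → 1 - (μ (Iic b1)).toReal < 1 - α →
      (∀ u v : ℝ, u ≤ v → 1 - α ≤ (μ (Icc u v)).toReal →
        (b1 - a1) + (b2 - a2) + (1 - β) * (a2 - b1) ≤ v - u) ∧
      (∀ u v : ℝ, IsShortest μ α u v → (b1 - a1) + (b2 - a2) < v - u)) := by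
  set H : Set ℝ := Icc a1 b1 ∪ Icc a2 b2 with hHdef
  rw [hH] at hmass
  have hHmeas : MeasurableSet H := (measurableSet_Icc.union measurableSet_Icc)
  have hfH : ∀ y ∈ H, lam ≤ f y := fun y hy => by rw [← hH] at hy; exact hy
  have hfnotH : ∀ y, y ∉ H → f y ≤ lam := fun y hy => by
    rw [← hH] at hy; exact (not_le.mp hy).le
  have hvolHr : (volume H).toReal = (b1 - a1) + (b2 - a2) := by
    rw [hHdef, measure_union (by
        rw [Set.disjoint_left]
        intro y hy1 hy2
        have := hy1.2; have := hy2.1; linarith)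
      measurableSet_Icc, Real.volume_Icc, Real.volume_Icc,
      ENNReal.toReal_add ENNReal.ofReal_ne_top ENNReal.ofReal_ne_top,
      ENNReal.toReal_ofReal (by linarith), ENNReal.toReal_ofReal (by linarith)]
  have hvolHfin : volume H ≠ ⊤ := by
    refine ne_top_of_le_ne_top ?_ (measure_mono (show H ⊆ Icc a1 b2 from ?_))
    · rw [Real.volume_Icc]; exact ENNReal.ofReal_ne_top
    · rintro y (hy | hy) <;> exact ⟨by linarith [hy.1], by linarith [hy.2]⟩
  have key : ∀ u v : ℝ, u ≤ v → 1 - α ≤ (μ (Icc u v)).toReal →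
      (Icc u v ∩ Icc a1 b1).Nonempty → (Icc u v ∩ Icc a2 b2).Nonempty →
      (b1 - a1) + (b2 - a2) + (1 - β) * (a2 - b1) ≤ v - u := by
    intro u v huv hmJ h1n h2n
    obtain ⟨p, hpJ, hp1⟩ := h1n
    obtain ⟨q, hqJ, hq2⟩ := h2n
    set J : Set ℝ := Icc u v with hJdef
    set V : Set ℝ := Ioo b1 a2 with hVdef
    have hJmeas : MeasurableSet J := measurableSet_Icc
    have hVJ : V ⊆ J := fun y hy =>
      ⟨le_trans hpJ.1 (le_trans hp1.2 hy.1.le), le_trans hy.2.le (le_trans hq2.1 hqJ.2)⟩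
    have hVB : V ⊆ J \ H := by
      intro y hy
      refine ⟨hVJ hy, ?_⟩
      rintro (h | h)
      · exact absurd h.2 (not_le.mpr hy.1)
      · exact absurd h.1 (not_le.mpr hy.2)
    have hJfin : volume J ≠ ⊤ := by rw [hJdef, Real.volume_Icc]; exact ENNReal.ofReal_ne_top
    have hBfin : volume (J \ H) ≠ ⊤ := ne_top_of_le_ne_top hJfin (measure_mono diff_subset)
    have hCfin : volume ((J \ H) \ V) ≠ ⊤ :=
      ne_top_of_le_ne_top hBfin (measure_mono diff_subset)
    have hAfin : volume (H \ J) ≠ ⊤ := ne_top_of_le_ne_top hvolHfin (measure_mono diff_subset)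
    have hJHfin : volume (J ∩ H) ≠ ⊤ :=
      ne_top_of_le_ne_top hJfin (measure_mono inter_subset_left)
    have hHJfin : volume (H ∩ J) ≠ ⊤ :=
      ne_top_of_le_ne_top hvolHfin (measure_mono inter_subset_left)
    have hVfin : volume V ≠ ⊤ := by rw [hVdef, Real.volume_Ioo]; exact ENNReal.ofReal_ne_top
    have hvolVr : (volume V).toReal = a2 - b1 := by
      rw [hVdef, Real.volume_Ioo, ENNReal.toReal_ofReal (by linarith)]
    -- μ (H \ J) ≤ μ (J \ H)
    have hmuHJ : μ H ≤ μ J := by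
      rw [← ENNReal.toReal_le_toReal (measure_ne_top μ _) (measure_ne_top μ _), hmass]
      exact hmJ
    have hsplitH : μ (H ∩ J) + μ (H \ J) = μ H := measure_inter_add_diff H hJmeas
    have hsplitJ : μ (H ∩ J) + μ (J \ H) = μ J := by
      rw [inter_comm]; exact measure_inter_add_diff J hHmeas
    have hAB : (μ (H \ J)).toReal ≤ (μ (J \ H)).toReal := by
      refine ENNReal.toReal_mono (measure_ne_top μ _) ?_
      refine (ENNReal.add_le_add_iff_left (measure_ne_top μ (H ∩ J))).mp ?_
      rw [hsplitH, hsplitJ]; exact hmuHJ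
    -- split μ (J \ H) over the valley
    have hBV : (J \ H) ∩ V = V := inter_eq_self_of_subset_right hVB
    have hBr : (μ (J \ H)).toReal = (μ V).toReal + (μ ((J \ H) \ V)).toReal := by
      rw [← measure_inter_add_diff (J \ H) measurableSet_Ioo, hBV,
        ENNReal.toReal_add (measure_ne_top μ _) (measure_ne_top μ _)]
    -- density bounds
    have hA : lam * (volume (H \ J)).toReal ≤ (μ (H \ J)).toReal :=
      stmt7_low μ f hf hdens lam hlam.le _ (hHmeas.diff hJmeas)
        (fun y hy => hfH y hy.1)
    have hVup : (μ V).toReal ≤ (β * lam) * (a2 - b1) := by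
      have := stmt7_up μ f hf hdens (β * lam) (by nlinarith [hβ.1]) V measurableSet_Ioo hVfin
        (fun y hy => hvalley y hy)
      rwa [hvolVr] at this
    have hCup : (μ ((J \ H) \ V)).toReal ≤ lam * (volume ((J \ H) \ V)).toReal :=
      stmt7_up μ f hf hdens lam hlam.le _ ((hJmeas.diff hHmeas).diff measurableSet_Ioo)
        hCfin (fun y hy => hfnotH y hy.1.2)
    -- volume identities
    have hvolJsplit : (volume J).toReal
        = (volume (H ∩ J)).toReal + (volume (J \ H)).toReal := by
      rw [← measure_inter_add_diff J hHmeas, ENNReal.toReal_add hJHfin hBfin, inter_comm]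
    have hvolHsplit : (volume H).toReal
        = (volume (H ∩ J)).toReal + (volume (H \ J)).toReal := by
      rw [← measure_inter_add_diff H hJmeas, ENNReal.toReal_add hHJfin hAfin]
    have hvolBsplit : (volume (J \ H)).toReal
        = (a2 - b1) + (volume ((J \ H) \ V)).toReal := by
      rw [← measure_inter_add_diff (J \ H) measurableSet_Ioo, hBV,
        ENNReal.toReal_add hVfin hCfin, hvolVr]
    have hvolJr : (volume J).toReal = v - u := by
      rw [hJdef, Real.volume_Icc, ENNReal.toReal_ofReal (by linarith)]
    -- combine
    have h9 : lam * (volume (H \ J)).toReal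
        ≤ β * lam * (a2 - b1) + lam * (volume ((J \ H) \ V)).toReal := by
      calc lam * (volume (H \ J)).toReal ≤ (μ (H \ J)).toReal := hA
      _ ≤ (μ (J \ H)).toReal := hAB
      _ = (μ V).toReal + (μ ((J \ H) \ V)).toReal := hBr
      _ ≤ β * lam * (a2 - b1) + lam * (volume ((J \ H) \ V)).toReal :=
          add_le_add hVup hCup
    have h10 : (volume (H \ J)).toReal
        ≤ β * (a2 - b1) + (volume ((J \ H) \ V)).toReal := by
      have h11' : lam * (volume (H \ J)).toReal
          ≤ lam * (β * (a2 - b1) + (volume ((J \ H) \ V)).toReal) := by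
        nlinarith [h9]
      exact (mul_le_mul_iff_right₀ hlam).mp h11'
    have hexp : (1 - β) * (a2 - b1) = (a2 - b1) - β * (a2 - b1) := by ring
    linarith [hvolJsplit, hvolHsplit, hvolBsplit, hvolJr, hvolHr, h10]
  refine ⟨key, fun hP hQ => ?_⟩
  have hIoi : (μ (Ioi b1)).toReal < 1 - α := by
    have hc1 : μ (Iic b1) + μ (Ioi b1) = 1 := by
      have := measure_add_measure_compl (μ := μ) (measurableSet_Iic (a := b1))
      rwa [compl_Iic, measure_univ] at this
    have hc2 : (μ (Iic b1)).toReal + (μ (Ioi b1)).toReal = 1 := by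
      rw [← ENNReal.toReal_add (measure_ne_top μ _) (measure_ne_top μ _), hc1, ENNReal.toReal_one]
    linarith
  have ball : ∀ u v : ℝ, u ≤ v → 1 - α ≤ (μ (Icc u v)).toReal →
      (b1 - a1) + (b2 - a2) + (1 - β) * (a2 - b1) ≤ v - u := by
    intro u v huv hm
    have hn2 : (Icc u v ∩ Icc a2 b2).Nonempty := by
      rcases lt_or_ge v a2 with h | h
      · exfalso
        have : (μ (Icc u v)).toReal ≤ (μ (Iio a2)).toReal :=
          ENNReal.toReal_mono (measure_ne_top μ _)
            (measure_mono fun y hy => lt_of_le_of_lt hy.2 h)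
        linarith
      · rcases lt_or_ge b2 u with h' | h'
        · exfalso
          have : (μ (Icc u v)).toReal ≤ (μ (Ioi b1)).toReal :=
            ENNReal.toReal_mono (measure_ne_top μ _)
              (measure_mono fun y hy => lt_of_lt_of_le (by linarith) hy.1)
          linarith
        · exact ⟨max u a2, ⟨le_max_left _ _, max_le huv h⟩,
            ⟨le_max_right _ _, max_le h' h22⟩⟩
    have hn1 : (Icc u v ∩ Icc a1 b1).Nonempty := by
      rcases lt_or_ge v a1 with h | h
      · exfalso
        have : (μ (Icc u v)).toReal ≤ (μ (Iio a2)).toReal :=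
          ENNReal.toReal_mono (measure_ne_top μ _)
            (measure_mono fun y hy => show y < a2 by have := hy.2; linarith)
        linarith
      · rcases lt_or_ge b1 u with h' | h'
        · exfalso
          have : (μ (Icc u v)).toReal ≤ (μ (Ioi b1)).toReal :=
            ENNReal.toReal_mono (measure_ne_top μ _)
              (measure_mono fun y hy => lt_of_lt_of_le h' hy.1)
          linarith
        · exact ⟨max u a1, ⟨le_max_left _ _, max_le huv (by linarith)⟩,
            ⟨le_max_right _ _, max_le h' h11⟩⟩
    exact key u v huv hm hn1 hn2
  refine ⟨ball, fun u v hin => ?_⟩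
  obtain ⟨⟨huv, hm⟩, -⟩ := hin
  have hb := ball u v huv hm
  have hpos : 0 < (1 - β) * (a2 - b1) := mul_pos (by linarith [hβ.2]) (by linarith)
  linarith

end
end

section
/- Let L : [ε, α−ε] → ℝ be Lipschitz with constant M and attain its minimum over [ε, α−ε] uniquely at an interior point τ* with N := [τ*−δ, τ*+δ] ⊂ [ε, α−ε] for some δ > 0. Suppose L is twice continuously differentiable on N with L''(τ) ≥ c > 0 for all τ ∈ N, and let κ := inf{L(τ) − L(τ*) : τ ∈ [ε, α−ε] \ N} > 0. Let G ⊂ [ε, α−ε] be a finite grid with covering mesh Δ, let L̂ : G → ℝ satisfy max_{g∈G} |L̂(g) − L(g)| ≤ r, and set b := MΔ + 2r. If b < κ, then every empirical grid minimizer τ̂ ∈ argmin_{τ∈G} L̂(τ) belongs to N and satisfies |τ̂ − τ*| ≤ √(2b/c). -/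
open Set

/-- local stability of the empirical grid minimizer. If `L` has a unique
interior minimizer `τ*` on `[ε, α-ε]`, is twice continuously differentiable with
`L'' ≥ c > 0` on the neighborhood `N = [τ*-δ, τ*+δ]`, the off-neighborhood gap is at
least `κ > 0`, and `b = MΔ + 2r < κ`, then every empirical grid minimizer `τh` of the
fitted curve lies in `N` and satisfies `|τh - τ*| ≤ √(2b/c)`. -/
theorem stmt10 (α ε M Δ r c δ κ b τstar : ℝ) (hε : ε ∈ Ioo (0:ℝ) (α / 2))
    (L L' L'' : ℝ → ℝ)
    (hLip : ∀ s ∈ Icc ε (α - ε), ∀ t ∈ Icc ε (α - ε), |L s - L t| ≤ M * |s - t|)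
    (hτs : τstar ∈ Ioo ε (α - ε))
    (hmin : ∀ τ ∈ Icc ε (α - ε), L τstar ≤ L τ)
    (huniq : ∀ τ ∈ Icc ε (α - ε), L τ = L τstar → τ = τstar)
    (hδ : 0 < δ) (hN : Icc (τstar - δ) (τstar + δ) ⊆ Icc ε (α - ε))
    (hd1 : ∀ τ ∈ Icc (τstar - δ) (τstar + δ),
      HasDerivWithinAt L (L' τ) (Icc (τstar - δ) (τstar + δ)) τ)
    (hd2 : ∀ τ ∈ Icc (τstar - δ) (τstar + δ),
      HasDerivWithinAt L' (L'' τ) (Icc (τstar - δ) (τstar + δ)) τ)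
    (hd2c : ContinuousOn L'' (Icc (τstar - δ) (τstar + δ)))
    (hc : 0 < c) (hcc : ∀ τ ∈ Icc (τstar - δ) (τstar + δ), c ≤ L'' τ)
    (hκ : 0 < κ)
    (hκle : ∀ τ ∈ Icc ε (α - ε) \ Icc (τstar - δ) (τstar + δ), κ ≤ L τ - L τstar)
    (G : Finset ℝ) (hGne : G.Nonempty) (hGsub : ↑G ⊆ Icc ε (α - ε))
    (hmesh : ∀ τ ∈ Icc ε (α - ε), ∃ g ∈ G, |τ - g| ≤ Δ)
    (Lhat : ℝ → ℝ) (hr : ∀ g ∈ G, |Lhat g - L g| ≤ r)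
    (hb : b = M * Δ + 2 * r) (hbκ : b < κ)
    (τh : ℝ) (hτh : τh ∈ G ∧ ∀ g ∈ G, Lhat τh ≤ Lhat g) :
    τh ∈ Icc (τstar - δ) (τstar + δ) ∧ |τh - τstar| ≤ Real.sqrt (2 * b / c) := by
  set N := Icc (τstar - δ) (τstar + δ) with hNdef
  have hτsN : τstar ∈ N := ⟨by linarith, by linarith⟩
  have hτsIcc : τstar ∈ Icc ε (α - ε) := ⟨hτs.1.le, hτs.2.le⟩
  -- L'(τstar) = 0
  have hNnhds : N ∈ nhds τstar := Icc_mem_nhds (by linarith) (by linarith)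
  have hLder : HasDerivAt L (L' τstar) τstar := (hd1 τstar hτsN).hasDerivAt hNnhds
  have hlocmin : IsLocalMin L τstar := by
    have : Icc ε (α - ε) ∈ nhds τstar := Icc_mem_nhds hτs.1 hτs.2
    exact Filter.eventually_of_mem this hmin
  have hL'0 : L' τstar = 0 := hlocmin.hasDerivAt_eq_zero hLder
  -- L' grows at rate ≥ c on N
  have contL' : ContinuousOn L' N := fun x hx => (hd2 x hx).continuousWithinAt
  have hD' : ∀ x ∈ Ioo (τstar - δ) (τstar + δ), HasDerivAt L' (L'' x) x := fun x hx =>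
    (hd2 x (Ioo_subset_Icc_self hx)).hasDerivAt (Icc_mem_nhds hx.1 hx.2)
  have step1 : ∀ x ∈ N, ∀ y ∈ N, x ≤ y → c * (y - x) ≤ L' y - L' x := by
    apply Convex.mul_sub_le_image_sub_of_le_deriv (convex_Icc _ _) contL'
    · intro x hx
      rw [interior_Icc] at hx
      exact (hD' x hx).differentiableAt.differentiableWithinAt
    · intro x hx
      rw [interior_Icc] at hx
      rw [(hD' x hx).deriv]
      exact hcc x (Ioo_subset_Icc_self hx)
  -- the auxiliary function F t = L t - c/2 (t - τstar)^2
  set F : ℝ → ℝ := fun t => L t - c / 2 * (t - τstar) ^ 2 with hFdef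
  have hFder : ∀ x ∈ Ioo (τstar - δ) (τstar + δ),
      HasDerivAt F (L' x - c * (x - τstar)) x := by
    intro x hx
    have h1 : HasDerivAt L (L' x) x :=
      (hd1 x (Ioo_subset_Icc_self hx)).hasDerivAt (Icc_mem_nhds hx.1 hx.2)
    have h2 : HasDerivAt (fun t => c / 2 * (t - τstar) ^ 2) (c * (x - τstar)) x := by
      have := (((hasDerivAt_id x).sub_const τstar).fun_pow 2).const_mul (c / 2)
      refine this.congr_deriv ?_
      simp only [id_eq]
      ring
    exact h1.sub h2
  have contF : ContinuousOn F N := by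
    apply ContinuousOn.sub (fun x hx => (hd1 x hx).continuousWithinAt)
    exact (continuous_const.mul ((continuous_id.sub continuous_const).pow 2)).continuousOn
  -- quadratic growth on N
  have quad : ∀ τ ∈ N, c / 2 * (τ - τstar) ^ 2 ≤ L τ - L τstar := by
    intro τ hτ
    rcases le_total τ τstar with hle | hle
    · -- left side: F is antitone on [τstar - δ, τstar]
      have key : ∀ x ∈ Icc (τstar - δ) τstar, ∀ y ∈ Icc (τstar - δ) τstar, x ≤ y →
          F y - F x ≤ 0 * (y - x) := by
        apply Convex.image_sub_le_mul_sub_of_deriv_le (convex_Icc _ _)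
          (contF.mono (Icc_subset_Icc_right (by linarith)))
        · intro x hx
          rw [interior_Icc] at hx
          have hx' : x ∈ Ioo (τstar - δ) (τstar + δ) := ⟨hx.1, by linarith [hx.2]⟩
          exact (hFder x hx').differentiableAt.differentiableWithinAt
        · intro x hx
          rw [interior_Icc] at hx
          have hx' : x ∈ Ioo (τstar - δ) (τstar + δ) := ⟨hx.1, by linarith [hx.2]⟩
          rw [(hFder x hx').deriv]
          have := step1 x (Ioo_subset_Icc_self hx') τstar hτsN hx.2.le
          rw [hL'0] at this
          nlinarith
      have := key τ ⟨hτ.1, hle⟩ τstar ⟨by linarith, le_refl _⟩ hle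
      simp only [hFdef] at this
      nlinarith
    · -- right side: F is monotone on [τstar, τstar + δ]
      have key : ∀ x ∈ Icc τstar (τstar + δ), ∀ y ∈ Icc τstar (τstar + δ), x ≤ y →
          0 * (y - x) ≤ F y - F x := by
        apply Convex.mul_sub_le_image_sub_of_le_deriv (convex_Icc _ _)
          (contF.mono (Icc_subset_Icc_left (by linarith)))
        · intro x hx
          rw [interior_Icc] at hx
          have hx' : x ∈ Ioo (τstar - δ) (τstar + δ) := ⟨by linarith [hx.1], hx.2⟩
          exact (hFder x hx').differentiableAt.differentiableWithinAt
        · intro x hx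
          rw [interior_Icc] at hx
          have hx' : x ∈ Ioo (τstar - δ) (τstar + δ) := ⟨by linarith [hx.1], hx.2⟩
          rw [(hFder x hx').deriv]
          have := step1 τstar hτsN x (Ioo_subset_Icc_self hx') hx.1.le
          rw [hL'0] at this
          nlinarith
      have := key τstar ⟨le_refl _, by linarith⟩ τ ⟨hle, hτ.2⟩ hle
      simp only [hFdef] at this
      nlinarith
  -- M ≥ 0
  have hMnn : 0 ≤ M := by
    have hεI : ε ∈ Icc ε (α - ε) := ⟨le_refl _, by linarith [hε.2]⟩
    have hαI : (α - ε) ∈ Icc ε (α - ε) := ⟨by linarith [hε.2], le_refl _⟩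
    have h := hLip ε hεI (α - ε) hαI
    have habs : |ε - (α - ε)| = α - 2 * ε := by
      rw [abs_of_nonpos (by linarith [hε.2])]; ring
    rw [habs] at h
    nlinarith [abs_nonneg (L ε - L (α - ε)), hε.2]
  -- gap bound: L τh - L τstar ≤ b
  obtain ⟨g, hgG, hgΔ⟩ := hmesh τstar hτsIcc
  have h1 := hr τh hτh.1
  have h2 := hr g hgG
  have h3 : Lhat τh ≤ Lhat g := hτh.2 g hgG
  have h4 : |L g - L τstar| ≤ M * Δ := by
    have := hLip g (hGsub hgG) τstar hτsIcc
    have habs : |g - τstar| = |τstar - g| := abs_sub_comm _ _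
    rw [habs] at this
    exact this.trans (mul_le_mul_of_nonneg_left hgΔ hMnn)
  have gap : L τh - L τstar ≤ b := by
    rw [hb]
    have e1 := (abs_le.1 h1).1
    have e2 := (abs_le.1 h2).2
    have e4 := (abs_le.1 h4).2
    linarith
  -- τh ∈ N
  have hτhN : τh ∈ N := by
    by_contra hnot
    have := hκle τh ⟨hGsub hτh.1, hnot⟩
    linarith
  refine ⟨hτhN, ?_⟩
  have hq := quad τh hτhN
  have hsq : (τh - τstar) ^ 2 ≤ 2 * b / c := by
    rw [le_div_iff₀ hc]
    nlinarith
  calc |τh - τstar| = Real.sqrt ((τh - τstar) ^ 2) := (Real.sqrt_sq_eq_abs _).symm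
    _ ≤ Real.sqrt (2 * b / c) := Real.sqrt_le_sqrt hsq
end

section
/- Let (X_i, Y_i), i = 1, …, m+1, be exchangeable random pairs taking values in 𝒳 × ℝ (their joint law is invariant under every permutation of the m+1 indices). Let ℓ, u : 𝒳 → ℝ be fixed measurable functions with ℓ(x) ≤ u(x) for all x, define the nonnegative score S(x,y) := max{ℓ(x) − y, y − u(x), 0} and E_i := S(X_i, Y_i). Set k := ⌈(m+1)(1−α)⌉; if k ≤ m let Q be the k-th smallest value among E_1, …, E_m, and if k = m+1 set Q := +∞. Then P(Y_{m+1} ∈ [ℓ(X_{m+1}) − Q, u(X_{m+1}) + Q]) ≥ 1 − α. -/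
open MeasureTheory Set
open scoped ENNReal

noncomputable section

/-- The `k`-th smallest value among `v 0, …, v (m-1)` (for `1 ≤ k ≤ m`), characterized
as the infimum of the thresholds below which at least `k` of the values lie. -/
def kthSmallest (m : ℕ) (v : Fin m → ℝ) (k : ℕ) : ℝ :=
  sInf {t : ℝ | k ≤ (Finset.univ.filter fun i => v i ≤ t).card}

open Finset in
private lemma kth_spec {n k : ℕ} (hk1 : 1 ≤ k) (hkn : k ≤ n) (v : Fin n → ℝ) :
    (k ≤ (univ.filter fun i => v i ≤ kthSmallest n v k).card) ∧
    (∀ t : ℝ, k ≤ (univ.filter fun i => v i ≤ t).card → kthSmallest n v k ≤ t) := by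
  have hne : Nonempty (Fin n) := ⟨⟨0, lt_of_lt_of_le hk1 hkn⟩⟩
  obtain ⟨imax, himax⟩ := Finite.exists_max v
  have hFmem : imax ∈ univ.filter (fun i => k ≤ (univ.filter fun j => v j ≤ v i).card) := by
    simp only [mem_filter, Finset.mem_univ, true_and]
    calc k ≤ n := hkn
      _ = (univ.filter fun j => v j ≤ v imax).card := by
          rw [filter_true_of_mem (fun j _ => himax j)]; simp
  obtain ⟨i0, hi0F, hi0min⟩ :=
    (univ.filter (fun i => k ≤ (univ.filter fun j => v j ≤ v i).card)).exists_min_image v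
      ⟨imax, hFmem⟩
  have hi0 : k ≤ (univ.filter fun j => v j ≤ v i0).card := by
    simpa using (mem_filter.mp hi0F).2
  have hlb : ∀ t : ℝ, k ≤ (univ.filter fun i => v i ≤ t).card → v i0 ≤ t := by
    intro t ht
    have hGne : (univ.filter fun i => v i ≤ t).Nonempty :=
      card_pos.mp (lt_of_lt_of_le hk1 ht)
    obtain ⟨j, hjG, hjmax⟩ := (univ.filter fun i => v i ≤ t).exists_max_image v hGne
    have hjle : v j ≤ t := (mem_filter.mp hjG).2
    have hjF : j ∈ univ.filter (fun i => k ≤ (univ.filter fun j' => v j' ≤ v i).card) := by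
      simp only [mem_filter, Finset.mem_univ, true_and]
      refine le_trans ht (card_le_card ?_)
      intro i hi
      simp only [mem_filter, Finset.mem_univ, true_and] at hi ⊢
      exact hjmax i (by simp [hi])
    exact (hi0min j hjF).trans hjle
  have hbdd : BddBelow {t : ℝ | k ≤ (univ.filter fun i => v i ≤ t).card} :=
    ⟨v i0, fun t ht => hlb t ht⟩
  have hQ : kthSmallest n v k = v i0 :=
    le_antisymm (csInf_le hbdd hi0) (le_csInf ⟨_, hi0⟩ fun t ht => hlb t ht)
  constructor
  · rw [hQ]; exact hi0
  · intro t ht; rw [hQ]; exact hlb t ht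

open Finset in
private lemma kth_lt_count {n k : ℕ} (hk1 : 1 ≤ k) (hkn : k ≤ n) (v : Fin n → ℝ) :
    (univ.filter fun i => v i < kthSmallest n v k).card < k := by
  by_contra h
  push_neg at h
  have hGne : (univ.filter fun i => v i < kthSmallest n v k).Nonempty :=
    card_pos.mp (lt_of_lt_of_le hk1 h)
  obtain ⟨j, hjG, hjmax⟩ := (univ.filter fun i => v i < kthSmallest n v k).exists_max_image v hGne
  have hjlt : v j < kthSmallest n v k := (mem_filter.mp hjG).2
  have : kthSmallest n v k ≤ v j := by
    refine (kth_spec hk1 hkn v).2 (v j) (le_trans h (card_le_card ?_))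
    intro i hi
    simp only [mem_filter, Finset.mem_univ, true_and] at hi ⊢
    exact hjmax i (by simp [hi])
  exact absurd this (not_le.mpr hjlt)

open Finset in
private lemma le_kth_of_count_lt {n k : ℕ} (hk1 : 1 ≤ k) (hkn : k ≤ n) (v : Fin n → ℝ)
    (e : ℝ) (h : (univ.filter fun i => v i < e).card < k) : e ≤ kthSmallest n v k := by
  by_contra h'
  push_neg at h'
  have h1 := (kth_spec hk1 hkn v).1
  have : (univ.filter fun i => v i ≤ kthSmallest n v k).card ≤
      (univ.filter fun i => v i < e).card := by
    refine card_le_card ?_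
    intro i hi
    simp only [mem_filter, Finset.mem_univ, true_and] at hi ⊢
    exact lt_of_le_of_lt hi h'
  omega

open Finset in
private lemma kth_nonneg {n k : ℕ} (hk1 : 1 ≤ k) (hkn : k ≤ n) (v : Fin n → ℝ)
    (hv : ∀ i, 0 ≤ v i) : 0 ≤ kthSmallest n v k := by
  have h1 := (kth_spec hk1 hkn v).1
  have hGne : (univ.filter fun i => v i ≤ kthSmallest n v k).Nonempty :=
    card_pos.mp (lt_of_lt_of_le hk1 h1)
  obtain ⟨i, hi⟩ := hGne
  exact le_trans (hv i) (mem_filter.mp hi).2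

open Finset in
private lemma count_low_rank {n k : ℕ} (hk1 : 1 ≤ k) (hkn : k ≤ n) (w : Fin n → ℝ) :
    k ≤ (univ.filter fun j => (univ.filter fun i => w i < w j).card < k).card := by
  have h1 := (kth_spec hk1 hkn w).1
  refine le_trans h1 (card_le_card ?_)
  intro j hj
  simp only [mem_filter, Finset.mem_univ, true_and] at hj ⊢
  refine lt_of_le_of_lt (card_le_card ?_) (kth_lt_count hk1 hkn w)
  intro i hi
  simp only [mem_filter, Finset.mem_univ, true_and] at hi ⊢
  exact lt_of_lt_of_le hi hj

open Finset in
private lemma card_filter_perm {n : ℕ} (π : Equiv.Perm (Fin n)) (p : Fin n → Prop)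
    [DecidablePred p] :
    (univ.filter fun i => p (π i)).card = (univ.filter p).card := by
  refine Finset.card_bij (fun i _ => π i) ?_ ?_ ?_
  · intro a ha; simp only [mem_filter, Finset.mem_univ, true_and] at ha ⊢; exact ha
  · intro a _ b _ h; exact π.injective h
  · intro b hb
    refine ⟨π.symm b, ?_, by simp⟩
    refine mem_filter.mpr ⟨Finset.mem_univ _, ?_⟩
    simpa using (mem_filter.mp hb).2

private lemma measSet_count {Ω' : Type*} [MeasurableSpace Ω'] {n : ℕ} (k : ℕ)
    (g : Fin n → Ω' → ℝ) (hg : ∀ i, Measurable (g i)) (g0 : Ω' → ℝ) (hg0 : Measurable g0) :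
    MeasurableSet {ω | (Finset.univ.filter fun i => g i ω < g0 ω).card < k} := by
  have hc : Measurable fun ω => (Finset.univ.filter fun i => g i ω < g0 ω).card := by
    simp_rw [Finset.card_filter]
    exact Finset.measurable_sum _ fun i _ =>
      Measurable.ite (measurableSet_lt (hg i) hg0) measurable_const measurable_const
  exact hc (MeasurableSet.of_discrete (s := {c : ℕ | c < k}))



/-- split-conformal marginal coverage. For exchangeable pairs
`(X_i, Y_i)`, `i = 1, …, m+1`, fixed measurable endpoint maps `ℓ ≤ u`, the
nonnegative conformity scores `E_i = max{ℓ(X_i) - Y_i, Y_i - u(X_i), 0}`,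
`k = ⌈(m+1)(1-α)⌉`, and the calibration radius `Q` equal to the `k`-th smallest of
`E_1, …, E_m` if `k ≤ m` and `+∞` otherwise, the interval
`[ℓ(X_{m+1}) - Q, u(X_{m+1}) + Q]` covers `Y_{m+1}` with probability at least `1-α`. -/
theorem stmt12 {𝒳 : Type*} [MeasurableSpace 𝒳] {Ω : Type*} [MeasurableSpace Ω]
    (P : Measure Ω) [IsProbabilityMeasure P]
    (α : ℝ) (hα : α ∈ Ioo (0:ℝ) 1) (m : ℕ)
    (X : Fin (m + 1) → Ω → 𝒳) (Y : Fin (m + 1) → Ω → ℝ)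
    (hXm : ∀ i, Measurable (X i)) (hYm : ∀ i, Measurable (Y i))
    (hexch : ∀ π : Equiv.Perm (Fin (m + 1)),
      Measure.map (fun ω => fun i => (X (π i) ω, Y (π i) ω)) P
        = Measure.map (fun ω => fun i => (X i ω, Y i ω)) P)
    (ℓ u : 𝒳 → ℝ) (hℓ : Measurable ℓ) (hu : Measurable u)
    (hℓu : ∀ x, ℓ x ≤ u x)
    (k : ℕ) (hk : k = ⌈((m : ℝ) + 1) * (1 - α)⌉₊)
    (Q : Ω → EReal)
    (hQ : Q = fun ω =>
      if k ≤ m then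
        ((kthSmallest m (fun i : Fin m =>
            max (max (ℓ (X i.castSucc ω) - Y i.castSucc ω)
                     (Y i.castSucc ω - u (X i.castSucc ω))) 0) k : ℝ) : EReal)
      else (⊤ : EReal)) :
    ENNReal.ofReal (1 - α) ≤
      P {ω | ((ℓ (X (Fin.last m) ω) : ℝ) : EReal) - Q ω ≤ ((Y (Fin.last m) ω : ℝ) : EReal)
          ∧ ((Y (Fin.last m) ω : ℝ) : EReal) ≤ ((u (X (Fin.last m) ω) : ℝ) : EReal) + Q ω} := by
  by_cases hkm : k ≤ m
  case neg =>
    have hset : {ω | ((ℓ (X (Fin.last m) ω) : ℝ) : EReal) - Q ω ≤ ((Y (Fin.last m) ω : ℝ) : EReal)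
          ∧ ((Y (Fin.last m) ω : ℝ) : EReal) ≤ ((u (X (Fin.last m) ω) : ℝ) : EReal) + Q ω}
        = Set.univ := by
      ext ω
      simp only [Set.mem_setOf_eq, Set.mem_univ, iff_true, hQ, if_neg hkm]
      constructor
      · rw [EReal.sub_top]
        exact bot_le
      · rw [EReal.coe_add_top]
        exact le_top
    rw [hset, measure_univ]
    exact ENNReal.ofReal_le_one.mpr (by linarith [hα.1])
  case pos =>
    have hα0 : 0 < α := hα.1
    have hα1 : α < 1 := hα.2
    have hk1 : 1 ≤ k := by
      rw [hk]
      have : 0 < ⌈((m : ℝ) + 1) * (1 - α)⌉₊ :=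
        Nat.ceil_pos.mpr (mul_pos (by positivity) (by linarith))
      omega
    have hkm1 : k ≤ m + 1 := le_trans hkm (Nat.le_succ m)
    -- scores
    obtain ⟨S, hSdef⟩ : ∃ S : 𝒳 × ℝ → ℝ,
        S = fun p => max (max (ℓ p.1 - p.2) (p.2 - u p.1)) 0 := ⟨_, rfl⟩
    have hS : Measurable S := by
      rw [hSdef]
      apply Measurable.max
      · exact Measurable.max ((hℓ.comp measurable_fst).sub measurable_snd)
          (measurable_snd.sub (hu.comp measurable_fst))
      · exact measurable_const
    obtain ⟨E, hEdef⟩ : ∃ E : Fin (m + 1) → Ω → ℝ,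
        E = fun i ω => S (X i ω, Y i ω) := ⟨_, rfl⟩
    have hE : ∀ i, Measurable (E i) := by
      intro i
      have : E i = fun ω => S (X i ω, Y i ω) := by rw [hEdef]
      rw [this]
      exact hS.comp ((hXm i).prodMk (hYm i))
    obtain ⟨A, hAdef⟩ : ∃ A : Fin (m + 1) → Set Ω,
        A = fun j => {ω | (Finset.univ.filter fun i => E i ω < E j ω).card < k} := ⟨_, rfl⟩
    have hAmem : ∀ j ω, ω ∈ A j ↔ (Finset.univ.filter fun i => E i ω < E j ω).card < k := by
      intro j ω; rw [hAdef]; exact Iff.rfl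
    have hAmeas : ∀ j, MeasurableSet (A j) := by
      intro j
      rw [hAdef]
      exact measSet_count k E hE (E j) (hE j)
    -- exchangeability: all A j have the same probability
    have hBmeas : MeasurableSet {v : Fin (m + 1) → 𝒳 × ℝ |
        (Finset.univ.filter fun i => S (v i) < S (v (Fin.last m))).card < k} := by
      have hg : ∀ i : Fin (m + 1), Measurable fun v : Fin (m + 1) → 𝒳 × ℝ => S (v i) :=
        fun i => hS.comp (measurable_pi_apply i)
      exact measSet_count (n := m + 1) k (fun i v => S (v i)) hg _ (hg (Fin.last m))
    have hf : Measurable fun ω => fun i : Fin (m + 1) => (X i ω, Y i ω) :=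
      measurable_pi_lambda _ fun i => (hXm i).prodMk (hYm i)
    have hswap : ∀ j, P (A j) = P (A (Fin.last m)) := by
      intro j
      set π := Equiv.swap j (Fin.last m) with hπ
      have hfπ : Measurable fun ω => fun i : Fin (m + 1) => (X (π i) ω, Y (π i) ω) :=
        measurable_pi_lambda _ fun i => (hXm (π i)).prodMk (hYm (π i))
      have h1 : (fun ω => fun i : Fin (m + 1) => (X i ω, Y i ω)) ⁻¹'
          {v : Fin (m + 1) → 𝒳 × ℝ |
            (Finset.univ.filter fun i => S (v i) < S (v (Fin.last m))).card < k}
          = A (Fin.last m) := by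
        ext ω
        rw [hAmem]
        simp only [Set.mem_preimage, Set.mem_setOf_eq, hEdef]
      have h2 : (fun ω => fun i : Fin (m + 1) => (X (π i) ω, Y (π i) ω)) ⁻¹'
          {v : Fin (m + 1) → 𝒳 × ℝ |
            (Finset.univ.filter fun i => S (v i) < S (v (Fin.last m))).card < k}
          = A j := by
        ext ω
        rw [hAmem]
        simp only [Set.mem_preimage, Set.mem_setOf_eq, hEdef]
        have hπlast : π (Fin.last m) = j := Equiv.swap_apply_right _ _
        simp only [hπlast]
        have hcardeq : (Finset.univ.filter
              fun i => S (X (π i) ω, Y (π i) ω) < S (X j ω, Y j ω)).card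
            = (Finset.univ.filter fun i => S (X i ω, Y i ω) < S (X j ω, Y j ω)).card :=
          card_filter_perm π (fun i => S (X i ω, Y i ω) < S (X j ω, Y j ω))
        rw [hcardeq]
      calc P (A j) = Measure.map (fun ω => fun i : Fin (m + 1) => (X (π i) ω, Y (π i) ω)) P
            {v : Fin (m + 1) → 𝒳 × ℝ |
              (Finset.univ.filter fun i => S (v i) < S (v (Fin.last m))).card < k} := by
            rw [Measure.map_apply hfπ hBmeas, h2]
        _ = Measure.map (fun ω => fun i : Fin (m + 1) => (X i ω, Y i ω)) P
            {v : Fin (m + 1) → 𝒳 × ℝ |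
              (Finset.univ.filter fun i => S (v i) < S (v (Fin.last m))).card < k} := by
            rw [hexch π]
        _ = P (A (Fin.last m)) := by rw [Measure.map_apply hf hBmeas, h1]
    -- pointwise: at least k of the indicators are 1
    have hpoint : ∀ ω, (k : ℝ≥0∞) ≤
        ∑ j : Fin (m + 1), (A j).indicator (fun _ => (1 : ℝ≥0∞)) ω := by
      intro ω
      have hcomb := count_low_rank hk1 hkm1 (fun i => E i ω)
      calc (k : ℝ≥0∞)
          ≤ ((Finset.univ.filter fun j : Fin (m + 1) =>
              (Finset.univ.filter fun i => E i ω < E j ω).card < k).card : ℝ≥0∞) := by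
            exact_mod_cast hcomb
        _ = ∑ j : Fin (m + 1), (A j).indicator (fun _ => (1 : ℝ≥0∞)) ω := by
            rw [Finset.card_filter]
            push_cast
            refine Finset.sum_congr rfl fun j _ => ?_
            by_cases hj : (Finset.univ.filter fun i => E i ω < E j ω).card < k
            · rw [if_pos hj, Set.indicator_of_mem ((hAmem j ω).mpr hj)]
            · rw [if_neg hj, Set.indicator_of_notMem (fun hc => hj ((hAmem j ω).mp hc))]
    -- summing
    have hsum : (k : ℝ≥0∞) ≤ ((m : ℝ≥0∞) + 1) * P (A (Fin.last m)) := by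
      have h1 : (k : ℝ≥0∞) ≤ ∑ j : Fin (m + 1), P (A j) := by
        calc (k : ℝ≥0∞) = ∫⁻ _, (k : ℝ≥0∞) ∂P := by simp
          _ ≤ ∫⁻ ω, ∑ j : Fin (m + 1), (A j).indicator (fun _ => (1 : ℝ≥0∞)) ω ∂P :=
            lintegral_mono hpoint
          _ = ∑ j : Fin (m + 1), ∫⁻ ω, (A j).indicator (fun _ => (1 : ℝ≥0∞)) ω ∂P := by
            rw [lintegral_finset_sum]
            exact fun j _ => (measurable_const.indicator (hAmeas j))
          _ = ∑ j : Fin (m + 1), P (A j) := by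
            refine Finset.sum_congr rfl fun j _ => ?_
            exact lintegral_indicator_one (hAmeas j)
      calc (k : ℝ≥0∞) ≤ ∑ j : Fin (m + 1), P (A j) := h1
        _ = ∑ _j : Fin (m + 1), P (A (Fin.last m)) := Finset.sum_congr rfl fun j _ => hswap j
        _ = ((m : ℝ≥0∞) + 1) * P (A (Fin.last m)) := by
          rw [Finset.sum_const, Finset.card_univ, Fintype.card_fin, nsmul_eq_mul]
          push_cast
          ring
    -- A (last) is contained in the coverage event
    have hsubset : A (Fin.last m) ⊆
        {ω | ((ℓ (X (Fin.last m) ω) : ℝ) : EReal) - Q ω ≤ ((Y (Fin.last m) ω : ℝ) : EReal)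
          ∧ ((Y (Fin.last m) ω : ℝ) : EReal) ≤ ((u (X (Fin.last m) ω) : ℝ) : EReal) + Q ω} := by
      intro ω hω
      rw [hAmem] at hω
      obtain ⟨v, hvdef⟩ : ∃ v : Fin m → ℝ, v = fun i => E i.castSucc ω := ⟨_, rfl⟩
      have hcount : (Finset.univ.filter fun i : Fin m => v i < E (Fin.last m) ω).card < k := by
        refine lt_of_le_of_lt ?_ hω
        refine Finset.card_le_card_of_injOn Fin.castSucc ?_ ?_
        · intro i hi
          refine Finset.mem_filter.mpr ⟨Finset.mem_univ _, ?_⟩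
          have := (Finset.mem_filter.mp hi).2
          rwa [hvdef] at this
        · exact fun a _ b _ h => Fin.castSucc_injective m h
      have hQle : E (Fin.last m) ω ≤ kthSmallest m v k :=
        le_kth_of_count_lt hk1 hkm v _ hcount
      have hQnn : 0 ≤ kthSmallest m v k := by
        refine kth_nonneg hk1 hkm v fun i => ?_
        rw [hvdef, hEdef, hSdef]
        exact le_max_right _ _
      have hQω : Q ω = ((kthSmallest m v k : ℝ) : EReal) := by
        rw [hQ]
        simp only [if_pos hkm]
        rw [hvdef, hEdef, hSdef]
      have hElast : E (Fin.last m) ω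
          = max (max (ℓ (X (Fin.last m) ω) - Y (Fin.last m) ω)
              (Y (Fin.last m) ω - u (X (Fin.last m) ω))) 0 := by
        rw [hEdef, hSdef]
      have hE1 : ℓ (X (Fin.last m) ω) - Y (Fin.last m) ω ≤ kthSmallest m v k := by
        refine le_trans ?_ hQle
        rw [hElast]
        exact le_trans (le_max_left _ _) (le_max_left _ _)
      have hE2 : Y (Fin.last m) ω - u (X (Fin.last m) ω) ≤ kthSmallest m v k := by
        refine le_trans ?_ hQle
        rw [hElast]
        exact le_trans (le_max_right _ _) (le_max_left _ _)
      constructor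
      · rw [hQω, ← EReal.coe_sub, EReal.coe_le_coe_iff]
        linarith
      · rw [hQω, ← EReal.coe_add, EReal.coe_le_coe_iff]
        linarith
    -- final arithmetic
    have hfin : ENNReal.ofReal (1 - α) ≤ P (A (Fin.last m)) := by
      have hmul : ((m : ℝ≥0∞) + 1) * ENNReal.ofReal (1 - α) ≤
          ((m : ℝ≥0∞) + 1) * P (A (Fin.last m)) := by
        calc ((m : ℝ≥0∞) + 1) * ENNReal.ofReal (1 - α)
            = ENNReal.ofReal (((m : ℝ) + 1) * (1 - α)) := by
              rw [ENNReal.ofReal_mul (by positivity)]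
              congr 1
              rw [ENNReal.ofReal_add (by positivity) zero_le_one]
              simp [ENNReal.ofReal_natCast]
          _ ≤ ENNReal.ofReal (k : ℝ) := by
              refine ENNReal.ofReal_le_ofReal ?_
              rw [hk]
              exact Nat.le_ceil _
          _ = (k : ℝ≥0∞) := ENNReal.ofReal_natCast k
          _ ≤ ((m : ℝ≥0∞) + 1) * P (A (Fin.last m)) := hsum
      have hne0 : ((m : ℝ≥0∞) + 1) ≠ 0 := by simp
      have hnetop : ((m : ℝ≥0∞) + 1) ≠ ⊤ := by
        simp [ENNReal.add_ne_top]
      exact (ENNReal.mul_le_mul_iff_right hne0 hnetop).mp hmul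
    exact le_trans hfin (measure_mono hsubset)

end
end

section
/- Let (𝒳, P_X) be a probability space and L : 𝒳 × [0,α] → [0,∞) be measurable, with τ ↦ L(x,τ) continuous on [0,α] for P_X-almost every x. For ε ∈ (0, α/2) define L*_ε(x) := min_{τ∈[ε,α−ε]} L(x,τ) and L*(x) := min_{τ∈[0,α]} L(x,τ), and define the truncation cost R_ε := ∫ (L*_ε(x) − L*(x)) dP_X(x). If ∫ L*_{ε₀}(x) dP_X(x) < ∞ for some ε₀ ∈ (0, α/2), then R_ε ≥ 0 and R_ε ↓ 0 as ε ↓ 0. If, in addition, for almost every x the map τ ↦ L(x,τ) is Lipschitz on [0,α] with constant M₀(x) and ∫ M₀(x) dP_X(x) < ∞, then 0 ≤ R_ε ≤ ε ∫ M₀(x) dP_X(x). -/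
open MeasureTheory Set Filter
open scoped ENNReal

noncomputable section

/-- Truncated oracle length: the infimum of the core-length curve over `[ε, α-ε]`. -/
def truncOracle (α : ℝ) {𝒳 : Type*} (L : 𝒳 → ℝ → ℝ) (ε : ℝ) (x : 𝒳) : ℝ :=
  sInf (L x '' Icc ε (α - ε))

/-- Truncation cost `R_ε = E_X[L*_ε(X) - L*(X)]` (as a lower Lebesgue integral). -/
def truncCost {𝒳 : Type*} [MeasurableSpace 𝒳] (PX : Measure 𝒳) (α : ℝ)
    (L : 𝒳 → ℝ → ℝ) (ε : ℝ) : ℝ≥0∞ :=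
  ∫⁻ x, ENNReal.ofReal (truncOracle α L ε x - truncOracle α L 0 x) ∂PX

section Aux

variable {𝒳 : Type*} {L : 𝒳 → ℝ → ℝ} {α : ℝ}

lemma bddBelow_image_aux (hLnn : ∀ x τ, 0 ≤ L x τ) (x : 𝒳) (s : Set ℝ) :
    BddBelow (L x '' s) := by
  refine ⟨0, fun y hy => ?_⟩
  obtain ⟨t, -, rfl⟩ := hy
  exact hLnn x t

lemma sInf_image_nonneg (hLnn : ∀ x τ, 0 ≤ L x τ) (x : 𝒳) (s : Set ℝ) :
    0 ≤ sInf (L x '' s) := by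
  refine Real.sInf_nonneg fun y hy => ?_
  obtain ⟨t, -, rfl⟩ := hy
  exact hLnn x t

lemma sInf_image_le (hLnn : ∀ x τ, 0 ≤ L x τ) (x : 𝒳) {s : Set ℝ} {τ : ℝ} (hτ : τ ∈ s) :
    sInf (L x '' s) ≤ L x τ :=
  csInf_le (bddBelow_image_aux hLnn x s) (mem_image_of_mem _ hτ)

lemma sInf_image_mono (hLnn : ∀ x τ, 0 ≤ L x τ) (x : 𝒳) {s t : Set ℝ} (hne : t.Nonempty)
    (hsub : t ⊆ s) : sInf (L x '' s) ≤ sInf (L x '' t) :=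
  csInf_le_csInf (bddBelow_image_aux hLnn x s) (hne.image _) (image_mono hsub)

lemma truncOracle_mono (hLnn : ∀ x τ, 0 ≤ L x τ) {ε₁ ε₂ : ℝ} (h12 : ε₁ ≤ ε₂)
    (h2 : ε₂ ≤ α - ε₂) (x : 𝒳) : truncOracle α L ε₁ x ≤ truncOracle α L ε₂ x :=
  sInf_image_mono hLnn x (nonempty_Icc.2 h2) (Icc_subset_Icc h12 (by linarith))

/-- attainment of the minimum for a continuous curve -/
lemma exists_isMin (hLnn : ∀ x τ, 0 ≤ L x τ) {x : 𝒳} {a b : ℝ} (hab : a ≤ b)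
    (hc : ContinuousOn (L x) (Icc a b)) :
    ∃ τ ∈ Icc a b, sInf (L x '' Icc a b) = L x τ ∧ ∀ t ∈ Icc a b, L x τ ≤ L x t := by
  obtain ⟨τ, hτ, hmin⟩ := isCompact_Icc.exists_isMinOn (nonempty_Icc.2 hab) hc
  have hmin' : ∀ t ∈ Icc a b, L x τ ≤ L x t := fun t ht => hmin ht
  refine ⟨τ, hτ, le_antisymm (sInf_image_le hLnn x hτ) ?_, hmin'⟩
  refine le_csInf ((nonempty_Icc.2 hab).image _) ?_
  rintro y ⟨t, ht, rfl⟩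
  exact hmin' t ht

/-- convergence of the truncated oracle as ε ↓ 0, for a continuous curve -/
lemma tendsto_truncOracle (hLnn : ∀ x τ, 0 ≤ L x τ) (hα : 0 < α) {x : 𝒳}
    (hc : ContinuousOn (L x) (Icc 0 α)) :
    Tendsto (fun ε => truncOracle α L ε x) (nhdsWithin 0 (Ioi 0))
      (nhds (truncOracle α L 0 x)) := by
  have h0 : truncOracle α L 0 x = sInf (L x '' Icc 0 α) := by
    simp [truncOracle]
  obtain ⟨τ, hτ, hval, hmin⟩ := exists_isMin hLnn hα.le hc
  set proj : ℝ → ℝ := fun ε => max ε (min τ (α - ε)) with hproj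
  have hev : ∀ᶠ ε in nhdsWithin (0:ℝ) (Ioi 0), ε ∈ Ioo (0:ℝ) (α / 2) := by
    have h1 : ∀ᶠ ε in nhdsWithin (0:ℝ) (Ioi 0), ε ∈ Ioi (0:ℝ) :=
      eventually_mem_nhdsWithin
    have h2 : ∀ᶠ ε in nhdsWithin (0:ℝ) (Ioi 0), ε ∈ Iio (α / 2) :=
      mem_nhdsWithin_of_mem_nhds (Iio_mem_nhds (by linarith))
    filter_upwards [h1, h2] with ε hε1 hε2
    exact ⟨hε1, hε2⟩
  have hprojmem : ∀ ε ∈ Ioo (0:ℝ) (α / 2), proj ε ∈ Icc ε (α - ε) := by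
    intro ε hε
    constructor
    · exact le_max_left _ _
    · exact max_le (by linarith [hε.2]) (min_le_right _ _)
  have hproj0 : Tendsto proj (nhdsWithin 0 (Ioi 0)) (nhdsWithin τ (Icc 0 α)) := by
    rw [tendsto_nhdsWithin_iff]
    constructor
    · have hcont : Continuous proj := by
        apply continuous_id.max (continuous_const.min (continuous_const.sub continuous_id))
      have := hcont.tendsto 0
      have hp0 : proj 0 = τ := by
        simp only [hproj, sub_zero]
        rw [min_eq_left hτ.2, max_eq_right hτ.1]
      rw [hp0] at this
      exact this.mono_left nhdsWithin_le_nhds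
    · filter_upwards [hev] with ε hε
      have := hprojmem ε hε
      exact ⟨by linarith [this.1, hε.1.le], by linarith [this.2, hε.1.le]⟩
  have hL : Tendsto (fun ε => L x (proj ε)) (nhdsWithin 0 (Ioi 0)) (nhds (L x τ)) :=
    (hc τ hτ).tendsto.comp hproj0
  rw [h0, hval]
  refine tendsto_of_tendsto_of_tendsto_of_le_of_le' tendsto_const_nhds hL ?_ ?_
  · filter_upwards [hev] with ε hε
    rw [← hval, ← h0]
    exact truncOracle_mono hLnn hε.1.le (by linarith [hε.2]) x
  · filter_upwards [hev] with ε hε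
    exact sInf_image_le hLnn x (hprojmem ε hε)

/-- a.e. measurability of the parametric infimum -/
lemma aemeasurable_sInf {m : MeasurableSpace 𝒳} {PX : Measure 𝒳}
    (hLmeas : Measurable (Function.uncurry L)) (hLnn : ∀ x τ, 0 ≤ L x τ)
    (hLcont : ∀ᵐ x ∂PX, ContinuousOn (L x) (Icc 0 α))
    {a b : ℝ} (ha : 0 ≤ a) (hab : a ≤ b) (hb : b ≤ α) :
    AEMeasurable (fun x => sInf (L x '' Icc a b)) PX := by
  classical
  set u : ℕ → ℝ := fun n =>
    Nat.rec a (fun k _ => if ((Denumerable.ofNat ℚ k : ℚ) : ℝ) ∈ Icc a b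
      then ((Denumerable.ofNat ℚ k : ℚ) : ℝ) else a) n with hu
  have hu0 : u 0 = a := rfl
  have huS : ∀ k : ℕ, u (k + 1) = if ((Denumerable.ofNat ℚ k : ℚ) : ℝ) ∈ Icc a b
      then ((Denumerable.ofNat ℚ k : ℚ) : ℝ) else a := fun k => rfl
  have humem : ∀ n, u n ∈ Icc a b := by
    intro n
    cases n with
    | zero => exact ⟨le_refl a, hab⟩
    | succ k =>
      rw [huS]
      split_ifs with h
      · exact h
      · exact ⟨le_refl a, hab⟩
  have hmeas : Measurable (fun x => ⨅ n, L x (u n)) := by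
    refine Measurable.iInf fun n => ?_
    exact hLmeas.comp (measurable_id.prodMk measurable_const)
  refine ⟨fun x => ⨅ n, L x (u n), hmeas, ?_⟩
  filter_upwards [hLcont] with x hcx
  have hc : ContinuousOn (L x) (Icc a b) := hcx.mono (Icc_subset_Icc ha hb)
  obtain ⟨τ, hτ, hval, hmin⟩ := exists_isMin hLnn hab hc
  have hbdd : BddBelow (range fun n => L x (u n)) := by
    refine ⟨0, fun y hy => ?_⟩
    obtain ⟨n, rfl⟩ := hy
    exact hLnn x (u n)
  apply le_antisymm
  · exact le_ciInf fun n => sInf_image_le hLnn x (humem n)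
  · rw [hval]
    refine le_of_forall_pos_le_add fun δ hδ => ?_
    have hcw : ContinuousWithinAt (L x) (Icc a b) τ := hc τ hτ
    rw [Metric.continuousWithinAt_iff] at hcw
    obtain ⟨η, hη, hball⟩ := hcw δ hδ
    -- find n₀ with u n₀ ∈ Icc a b and dist (u n₀) τ < η
    obtain ⟨n₀, hn₀⟩ : ∃ n₀, dist (u n₀) τ < η := by
      rcases eq_or_lt_of_le hab with heq | hlt
      · refine ⟨0, ?_⟩
        have : τ = a := by
          have h1 := hτ.1; have h2 := hτ.2; rw [← heq] at h2; linarith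
        simp [hu0, this, hη]
      · set lo := max a (τ - η) with hlo
        set hi := min b (τ + η) with hhi
        have hlohi : lo < hi := by
          rw [hlo, hhi]
          apply max_lt <;> apply lt_min
          · exact hlt
          · linarith [hτ.1]
          · linarith [hτ.2]
          · linarith
        obtain ⟨q, hq1, hq2⟩ := exists_rat_btwn hlohi
        have hqmem : ((q : ℚ) : ℝ) ∈ Icc a b :=
          ⟨le_of_lt (lt_of_le_of_lt (le_max_left _ _) hq1),
           le_of_lt (lt_of_lt_of_le hq2 (min_le_left _ _))⟩
        obtain ⟨k, hk⟩ : ∃ k, ((Denumerable.ofNat ℚ k : ℚ) : ℝ) = (q : ℝ) :=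
          ⟨_, congrArg _ (Denumerable.ofNat_encode q)⟩
        refine ⟨k + 1, ?_⟩
        rw [huS, hk, if_pos hqmem]
        rw [Real.dist_eq, abs_sub_lt_iff]
        constructor
        · have : (q : ℝ) < τ + η := lt_of_lt_of_le hq2 (min_le_right _ _)
          linarith
        · have : τ - η < (q : ℝ) := lt_of_le_of_lt (le_max_right _ _) hq1
          linarith
    have hd := hball (humem n₀) hn₀
    rw [Real.dist_eq, abs_sub_lt_iff] at hd
    calc ⨅ n, L x (u n) ≤ L x (u n₀) := ciInf_le hbdd n₀
      _ ≤ L x τ + δ := by linarith [hd.1]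

end Aux

/-- the truncation cost `R_ε` is nonnegative and decreases to `0` as
`ε ↓ 0`, provided the truncated oracle length is integrable for some `ε₀ ∈ (0, α/2)`
and the core-length curve is a.e. continuous; under an integrable Lipschitz bound,
`R_ε ≤ ε ∫ M₀`. -/
theorem stmt13 {𝒳 : Type*} [MeasurableSpace 𝒳] (PX : Measure 𝒳) [IsProbabilityMeasure PX]
    (α : ℝ) (hα : α ∈ Ioo (0:ℝ) 1)
    (L : 𝒳 → ℝ → ℝ) (hLmeas : Measurable (Function.uncurry L))
    (hLnn : ∀ x τ, 0 ≤ L x τ)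
    (hLcont : ∀ᵐ x ∂PX, ContinuousOn (L x) (Icc 0 α))
    (ε₀ : ℝ) (hε₀ : ε₀ ∈ Ioo (0:ℝ) (α / 2))
    (hfin : ∫⁻ x, ENNReal.ofReal (truncOracle α L ε₀ x) ∂PX < ⊤) :
    (∀ ε, 0 ≤ truncCost PX α L ε) ∧
    (∀ ε₁ ε₂ : ℝ, 0 < ε₁ → ε₁ ≤ ε₂ → ε₂ < α / 2 →
      truncCost PX α L ε₁ ≤ truncCost PX α L ε₂) ∧
    Tendsto (fun ε => truncCost PX α L ε) (nhdsWithin 0 (Ioi 0)) (nhds 0) ∧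
    (∀ M₀ : 𝒳 → ℝ,
      (∀ᵐ x ∂PX, ∀ s ∈ Icc (0:ℝ) α, ∀ t ∈ Icc (0:ℝ) α,
        |L x s - L x t| ≤ M₀ x * |s - t|) →
      ∀ ε ∈ Ioo (0:ℝ) (α / 2),
        truncCost PX α L ε ≤ ENNReal.ofReal ε * ∫⁻ x, ENNReal.ofReal (M₀ x) ∂PX) := by
  have hα0 : 0 < α := hα.1
  -- monotonicity statement
  have hmono : ∀ ε₁ ε₂ : ℝ, 0 < ε₁ → ε₁ ≤ ε₂ → ε₂ < α / 2 →
      truncCost PX α L ε₁ ≤ truncCost PX α L ε₂ := by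
    intro ε₁ ε₂ h1 h12 h2
    refine lintegral_mono fun x => ?_
    apply ENNReal.ofReal_le_ofReal
    have := truncOracle_mono (α := α) hLnn h12 (by linarith) x
    linarith
  refine ⟨fun ε => zero_le, hmono, ?_, ?_⟩
  · -- convergence to 0
    set c : ℕ → ℝ := fun n => ε₀ / (n + 1) with hc
    have hc_pos : ∀ n, 0 < c n := fun n => div_pos hε₀.1 (by positivity)
    have hc_le : ∀ n, c n ≤ ε₀ := fun n =>
      div_le_self hε₀.1.le (by linarith [Nat.cast_nonneg (α := ℝ) n])
    have hc_lt : ∀ n, c n < α / 2 := fun n => lt_of_le_of_lt (hc_le n) hε₀.2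
    have hc_tendsto : Tendsto c atTop (nhds 0) := by
      apply Tendsto.div_atTop tendsto_const_nhds
      exact tendsto_atTop_add_const_right _ 1 tendsto_natCast_atTop_atTop
    have hDC : Tendsto (fun n => truncCost PX α L (c n)) atTop (nhds 0) := by
      have key := tendsto_lintegral_of_dominated_convergence'
        (μ := PX)
        (F := fun n x => ENNReal.ofReal (truncOracle α L (c n) x - truncOracle α L 0 x))
        (f := fun _ => 0)
        (bound := fun x => ENNReal.ofReal (truncOracle α L ε₀ x))
        ?_ ?_ ?_ ?_
      · simpa [truncCost] using key
      · intro n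
        have h1 : AEMeasurable (fun x => truncOracle α L (c n) x) PX :=
          aemeasurable_sInf hLmeas hLnn hLcont (hc_pos n).le (by linarith [hc_lt n])
            (by linarith [hc_pos n])
        have h2 : AEMeasurable (fun x => truncOracle α L 0 x) PX :=
          aemeasurable_sInf hLmeas hLnn hLcont le_rfl (by linarith) (by linarith)
        exact (h1.sub h2).ennreal_ofReal
      · intro n
        refine Eventually.of_forall fun x => ?_
        apply ENNReal.ofReal_le_ofReal
        have h1 : truncOracle α L (c n) x ≤ truncOracle α L ε₀ x :=
          truncOracle_mono hLnn (hc_le n) (by linarith [hε₀.2]) x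
        have h2 : 0 ≤ truncOracle α L 0 x := sInf_image_nonneg hLnn x _
        linarith
      · exact hfin.ne
      · filter_upwards [hLcont] with x hcx
        have h1 := tendsto_truncOracle hLnn hα0 hcx
        have h2 : Tendsto c atTop (nhdsWithin 0 (Ioi 0)) :=
          tendsto_nhdsWithin_iff.2 ⟨hc_tendsto, Eventually.of_forall fun n => hc_pos n⟩
        have h3 : Tendsto (fun n => truncOracle α L (c n) x - truncOracle α L 0 x)
            atTop (nhds 0) := by
          have := (h1.comp h2).sub_const (truncOracle α L 0 x)
          simpa using this
        have := ENNReal.tendsto_ofReal h3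
        simpa using this
    rw [ENNReal.tendsto_nhds_zero]
    intro δ hδ
    rw [ENNReal.tendsto_nhds_zero] at hDC
    obtain ⟨N, hN⟩ := (hDC δ hδ).exists
    have hev : ∀ᶠ ε in nhdsWithin (0:ℝ) (Ioi 0), ε ∈ Ioo 0 (c N) := by
      have h1 : ∀ᶠ ε in nhdsWithin (0:ℝ) (Ioi 0), ε ∈ Ioi (0:ℝ) :=
        eventually_mem_nhdsWithin
      have h2 : ∀ᶠ ε in nhdsWithin (0:ℝ) (Ioi 0), ε ∈ Iio (c N) :=
        mem_nhdsWithin_of_mem_nhds (Iio_mem_nhds (hc_pos N))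
      filter_upwards [h1, h2] with ε he1 he2
      exact ⟨he1, he2⟩
    filter_upwards [hev] with ε hε
    exact le_trans (hmono ε (c N) hε.1 hε.2.le (hc_lt N)) hN
  · -- Lipschitz bound
    intro M₀ hLip ε hε
    have key : ∀ᵐ x ∂PX, ENNReal.ofReal (truncOracle α L ε x - truncOracle α L 0 x)
        ≤ ENNReal.ofReal ε * ENNReal.ofReal (M₀ x) := by
      filter_upwards [hLcont, hLip] with x hcx hlx
      have h0 : truncOracle α L 0 x = sInf (L x '' Icc 0 α) := by simp [truncOracle]
      obtain ⟨τ, hτ, hval, hmin⟩ := exists_isMin hLnn hα0.le hcx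
      have hM0 : 0 ≤ M₀ x := by
        have h := hlx 0 ⟨le_refl 0, hα0.le⟩ α ⟨hα0.le, le_refl α⟩
        have h2 : (0:ℝ) ≤ M₀ x * |0 - α| := le_trans (abs_nonneg _) h
        have h3 : |0 - α| = α := by rw [zero_sub, abs_neg, abs_of_pos hα0]
        nlinarith [h2, h3]
      set proj : ℝ := max ε (min τ (α - ε)) with hproj
      have hpmem : proj ∈ Icc ε (α - ε) :=
        ⟨le_max_left _ _, max_le (by linarith [hε.2]) (min_le_right _ _)⟩
      have hpmem' : proj ∈ Icc (0:ℝ) α :=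
        ⟨by linarith [hpmem.1, hε.1.le], by linarith [hpmem.2, hε.1.le]⟩
      have habs : |proj - τ| ≤ ε := by
        rw [abs_sub_le_iff]
        constructor
        · have h1 : proj ≤ τ + ε :=
            max_le (by linarith [hτ.1]) ((min_le_left _ _).trans (by linarith [hε.1]))
          linarith
        · have h2 : τ - ε ≤ proj :=
            (le_min (by linarith [hε.1]) (by linarith [hτ.2])).trans (le_max_right _ _)
          linarith
      have hLproj : L x proj ≤ L x τ + M₀ x * ε := by
        have h := hlx proj hpmem' τ hτ
        have h3 : M₀ x * |proj - τ| ≤ M₀ x * ε := mul_le_mul_of_nonneg_left habs hM0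
        have h4 : L x proj - L x τ ≤ M₀ x * |proj - τ| := by
          calc L x proj - L x τ ≤ |L x proj - L x τ| := le_abs_self _
            _ ≤ M₀ x * |proj - τ| := h
        linarith
      have hub : truncOracle α L ε x ≤ L x proj := sInf_image_le hLnn x hpmem
      have : truncOracle α L ε x - truncOracle α L 0 x ≤ ε * M₀ x := by
        rw [h0, hval]
        nlinarith [hub, hLproj]
      calc ENNReal.ofReal (truncOracle α L ε x - truncOracle α L 0 x)
          ≤ ENNReal.ofReal (ε * M₀ x) := ENNReal.ofReal_le_ofReal this
        _ = ENNReal.ofReal ε * ENNReal.ofReal (M₀ x) := ENNReal.ofReal_mul hε.1.le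
    calc truncCost PX α L ε
        ≤ ∫⁻ x, ENNReal.ofReal ε * ENNReal.ofReal (M₀ x) ∂PX := lintegral_mono_ae key
      _ = ENNReal.ofReal ε * ∫⁻ x, ENNReal.ofReal (M₀ x) ∂PX :=
          lintegral_const_mul' _ _ ENNReal.ofReal_ne_top

end
end
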